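/- arXiv:2201.08063 — 5 statements merged into one kernel-verified Lean document; each statement's English description precedes it below -/
import Mathlib

section
/- Let $N > 1$ and $1 \le i \le N$ be integers. Given any complex numbers $x_1,\dots,x_{i-1},x_{i+1},\dots,x_N$ such that $x_j \neq x_{j'}$ for all $1 \le j \le i-1$ and $i+1 \le j' \le N$, there exist complex numbers $x_i, y_1,\dots,y_{N-1}$ such that the matrix $X = \sum_{j=1}^N x_j E_{j,j} + \sum_{j=1}^{N-1} E_{j,j+1} + \sum_{j=1}^{i-1} y_j E_{i,j} + \sum_{j=i}^{N-1} y_j E_{j+1,i}$ satisfies $\det(\lambda I_N + X) = \lambda^N$, i.e. $X$ is nilpotent with characteristic polynomial $\lambda^N$. -/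
open Matrix

/-- The matrix `X = ∑ xⱼ Eⱼⱼ + ∑ E_{j,j+1} + (entries y in row i, columns < i) +
(entries y in column i, rows > i)`, written 0-indexed. -/
noncomputable def hypMat (N : ℕ) (i : Fin N) (x : Fin N → ℂ) (y : ℕ → ℂ) :
    Matrix (Fin N) (Fin N) ℂ :=
  Matrix.of fun p q =>
    if p = q then x p
    else if (q : ℕ) = (p : ℕ) + 1 then 1
    else if p = i ∧ q < i then y (q : ℕ)
    else if q = i ∧ i < p then y ((p : ℕ) - 1)
    else 0

/-!
Write `e_p` for the standard row vectors (with `e_N = 0`) and `d_k` for the diagonal of `X`.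
The rows of `X` read `e_p (X - d_p) = e_{p+1}` for `p < i`,
`e_i (X - d_i) = e_{i+1} + ∑_{q<i} y_q e_q`, and `e_p (X - d_p) = e_{p+1} + y_{p-1} e_i`
for `p > i`.
With `P = ∏_{k<i} (t - d_k)` and `Q = ∏_{k>i} (t - d_k)` this gives `e_0 F(X) = 0` for
`F = (t - d_i) P Q - R Q - S P`, where `R` and `S` are the combinations with coefficients `y` of
the monic partial products of `P` and `Q`; as `y` varies they run over all polynomials of degree
`< deg P` and `< deg Q`. The hypothesis makes `P` and `Q` coprime, so partial fractions for
`t^N / (P Q)` produce `d_i`, `R`, `S` with `F = t^N`. Then row `0` of `X^N` vanishes, and since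
`X` is lower Hessenberg with unit superdiagonal and commutes with `X^N`, so do all other rows:
`X` is nilpotent.
-/

open Polynomial Finset

section Polynomials

variable {K : Type*} [Field K]

/-- Partial fractions give `X ^ n = q P Q + r₀ Q + r₁ P`; comparing degrees, `q` is monic
linear. -/
theorem Polynomial.exists_X_sub_C_mul_mul_sub_eq_X_pow {P Q : K[X]}
    (hP : P.Monic) (hQ : Q.Monic) (hPQ : IsCoprime P Q) :
    ∃ (c : K) (R S : K[X]), R.degree < P.degree ∧ S.degree < Q.degree ∧
      (X - C c) * P * Q - R * Q - S * P = X ^ (P.natDegree + Q.natDegree + 1) := by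
  set n := P.natDegree + Q.natDegree + 1
  obtain ⟨q, r, hr, hf⟩ := eq_quo_mul_prod_add_sum_rem_mul_prod (s := univ) (X ^ n)
    (g := ![P, Q]) (by simp [Fin.forall_fin_two, hP, hQ])
    (by intro a _ b _ hab; fin_cases a <;> fin_cases b <;> simp_all [hPQ.symm])
  have h0 : (univ : Finset (Fin 2)).erase 0 = {1} := by decide
  have h1 : (univ : Finset (Fin 2)).erase 1 = {0} := by decide
  simp only [Fin.prod_univ_two, Fin.sum_univ_two, h0, h1, prod_singleton, Fin.forall_fin_two,
    mem_univ, forall_const, Matrix.cons_val_zero, Matrix.cons_val_one] at hf hr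
  have hPQ_monic : (P * Q).Monic := hP.mul hQ
  have hrem : (r 0 * Q + r 1 * P).degree < n := by
    have hlt (R F G : K[X]) (hG : G ≠ 0) (h : R.degree < F.degree) :
        (R * G).degree < (F * G).degree := by
      rw [degree_mul, degree_mul]
      exact WithBot.add_lt_add_right (degree_ne_bot.mpr hG) h
    refine (degree_add_le _ _).trans_lt (max_lt ?_ ?_)
    · refine (hlt _ _ _ hQ.ne_zero hr.1).trans ?_
      rw [degree_eq_natDegree hPQ_monic.ne_zero, hP.natDegree_mul hQ]
      exact_mod_cast Nat.lt_succ_self _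
    · refine (hlt _ _ _ hP.ne_zero hr.2).trans ?_
      rw [degree_eq_natDegree (hQ.mul hP).ne_zero, hQ.natDegree_mul hP]
      exact_mod_cast (by omega)
  have hqPQ : q * (P * Q) = X ^ n - (r 0 * Q + r 1 * P) := by rw [hf]; ring
  have hq : q.Monic := hPQ_monic.of_mul_monic_right (hqPQ ▸ monic_X_pow_sub hrem)
  have hq1 : q.natDegree = 1 := by
    have hXn : (X ^ n - (r 0 * Q + r 1 * P)).natDegree = n :=
      natDegree_eq_of_degree_eq_some (by rw [degree_sub_eq_left_of_degree_lt] <;> simp [hrem])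
    have h := congrArg natDegree hqPQ
    rw [hq.natDegree_mul hPQ_monic, hP.natDegree_mul hQ, hXn] at h
    omega
  refine ⟨-q.coeff 0, -r 0, -r 1, by simpa using hr.1, by simpa using hr.2, ?_⟩
  rw [map_neg, sub_neg_eq_add, ← hq.eq_X_add_C hq1, hf]
  ring

noncomputable def prodXSubC (d : ℕ → K) (m : ℕ) : K[X] :=
  ∏ k ∈ range m, (X - C (d k))

theorem monic_prodXSubC (d : ℕ → K) (m : ℕ) : (prodXSubC d m).Monic := monic_prod_X_sub_C _ _

theorem natDegree_prodXSubC (d : ℕ → K) (m : ℕ) : (prodXSubC d m).natDegree = m := by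
  simp [prodXSubC]

theorem degree_prodXSubC (d : ℕ → K) (m : ℕ) : (prodXSubC d m).degree = m := by
  rw [degree_eq_natDegree (monic_prodXSubC d m).ne_zero, natDegree_prodXSubC]

theorem isCoprime_prodXSubC {d e : ℕ → K} {a b : ℕ} (h : ∀ k < a, ∀ l < b, d k ≠ e l) :
    IsCoprime (prodXSubC d a) (prodXSubC e b) :=
  IsCoprime.prod_left fun k hk => IsCoprime.prod_right fun l hl =>
    isCoprime_X_sub_C_of_isUnit_sub
      (sub_ne_zero.mpr (h k (mem_range.mp hk) l (mem_range.mp hl))).isUnit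

theorem exists_sum_C_mul_prodXSubC_eq (d : ℕ → K) {m : ℕ} {f : K[X]} (hf : f.degree < m) :
    ∃ c : ℕ → K, ∑ q ∈ range m, C (c q) * prodXSubC d q = f := by
  let S : Sequence K := ⟨prodXSubC d, degree_prodXSubC d⟩
  have hspan : f ∈ Submodule.span K (S '' ↑(range m)) := by
    rw [coe_range, S.span_degreeLT fun q _ => by simp [S, (monic_prodXSubC d q).leadingCoeff]]
    exact mem_degreeLT.mpr hf
  simpa only [smul_eq_C_mul] using (Submodule.mem_span_image_finset_iff_exists_fun' K).mp hspan

theorem exists_sum_C_mul_prodXSubC_eq_and_reflect (d : ℕ → K) {i N : ℕ} {R S : K[X]}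
    (hR : R.degree < i) (hS : S.degree < (N - 1 - i : ℕ)) :
    ∃ y : ℕ → K, ∑ q ∈ range i, C (y q) * prodXSubC d q = R ∧
      ∑ l ∈ range (N - 1 - i), C (y (N - 2 - l)) * prodXSubC (fun k => d (N - 1 - k)) l =
        S := by
  obtain ⟨a, rfl⟩ := exists_sum_C_mul_prodXSubC_eq d hR
  obtain ⟨b, rfl⟩ := exists_sum_C_mul_prodXSubC_eq (fun k => d (N - 1 - k)) hS
  refine ⟨fun k => if k < i then a k else b (N - 2 - k), sum_congr rfl fun q hq => ?_,
    sum_congr rfl fun l hl => ?_⟩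
  · simp [mem_range.mp hq]
  · have := mem_range.mp hl
    simp [show ¬N - 2 - l < i by omega, show N - 2 - (N - 2 - l) = l by omega]

end Polynomials

section Matrices

variable {R : Type*} {N : ℕ}

/-- Row `p + 1` of `B` is row `p` of `A * B = B * A`, up to rows of `B` of index `≤ p`. -/
theorem Matrix.eq_zero_of_commute_of_row_zero [Semiring R] {A B : Matrix (Fin N) (Fin N) R}
    (hsup : ∀ p q : Fin N, (q : ℕ) = p + 1 → A p q = 1)
    (hhess : ∀ p q : Fin N, (p : ℕ) + 1 < q → A p q = 0) (hAB : Commute A B)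
    (hB : ∀ p : Fin N, (p : ℕ) = 0 → B p = 0) : B = 0 := by
  suffices h : ∀ n (p : Fin N), (p : ℕ) = n → B p = 0 by
    ext p q; exact congrFun (h _ p rfl) q
  intro n
  induction n using Nat.strong_induction_on with
  | _ n ih =>
    intro p hp
    rcases n with _ | n
    · exact hB p hp
    let p' : Fin N := ⟨n, by omega⟩
    have hbelow (r : Fin N) (hr : (r : ℕ) ≤ n) : B r = 0 := ih r (by omega) r rfl
    ext q
    calc B p q = (A * B) p' q := by
          rw [Matrix.mul_apply, Fintype.sum_eq_single p, hsup p' p (by simp [p', hp]), one_mul]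
          intro r hr
          rcases le_or_gt (r : ℕ) n with h | h
          · rw [hbelow r h, Pi.zero_apply, mul_zero]
          · rw [hhess p' r (by simp [p']; omega), zero_mul]
      _ = (B * A) p' q := by rw [hAB.eq]
      _ = 0 := by
          rw [Matrix.mul_apply]
          exact Finset.sum_eq_zero fun r _ => by rw [hbelow p' le_rfl, Pi.zero_apply, zero_mul]

theorem Matrix.charpoly_eq_X_pow_of_isNilpotent {n : Type*} [CommRing R] [IsReduced R]
    [Fintype n] [DecidableEq n] {M : Matrix n n R} (hM : IsNilpotent M) :
    M.charpoly = X ^ Fintype.card n :=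
  sub_eq_zero.mp <| Polynomial.ext fun k =>
    (Polynomial.isNilpotent_iff.mp (isNilpotent_charpoly_sub_pow_of_isNilpotent hM) k).eq_zero

theorem Matrix.det_smul_one_add_of_isNilpotent {n : Type*} [CommRing R] [IsReduced R]
    [Fintype n] [DecidableEq n] {M : Matrix n n R} (hM : IsNilpotent M) (t : R) :
    (t • (1 : Matrix n n R) + M).det = t ^ Fintype.card n := by
  have h := eval_charpoly (-M) t
  rw [charpoly_eq_X_pow_of_isNilpotent hM.neg, eval_pow, eval_X, sub_neg_eq_add, scalar_apply,
    ← smul_one_eq_diagonal] at h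
  exact h.symm

/-- The standard basis vector `e_m`, indexed by `m : ℕ` so that `e_N = 0` is available. -/
def natSingle (R : Type*) [Zero R] [One R] (N m : ℕ) : Fin N → R :=
  fun q => if (q : ℕ) = m then 1 else 0

theorem natSingle_of_le [Zero R] [One R] {m : ℕ} (hm : N ≤ m) : natSingle R N m = 0 := by
  ext q; simp [natSingle]; omega

theorem natSingle_vecMul [NonAssocSemiring R] (A : Matrix (Fin N) (Fin N) R) {m : ℕ}
    (hm : m < N) :
    natSingle R N m ᵥ* A = A ⟨m, hm⟩ := by
  have : natSingle R N m = Pi.single ⟨m, hm⟩ 1 := by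
    ext q; simp [natSingle, Pi.single_apply, Fin.ext_iff]
  rw [this, single_one_vecMul, row]

theorem vecMul_aeval_X_sub_C [CommRing R] {n : Type*} [Fintype n] [DecidableEq n]
    (A : Matrix n n R) (v : n → R) (c : R) : v ᵥ* aeval A (X - C c) = v ᵥ* A - c • v := by
  simp [vecMul_sub, Algebra.algebraMap_eq_smul_one, vecMul_smul]

end Matrices

section HypMat

variable {N : ℕ} (i : Fin N) (d y : ℕ → ℂ) (c : ℂ)

theorem hypMat_apply_of_eq_add_one (x : Fin N → ℂ) (p q : Fin N) (h : (q : ℕ) = p + 1) :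
    hypMat N i x y p q = 1 := by
  simp only [hypMat, of_apply]
  rw [if_neg (by rintro rfl; omega), if_pos h]

theorem hypMat_apply_of_add_one_lt (x : Fin N → ℂ) (p q : Fin N) (h : (p : ℕ) + 1 < q) :
    hypMat N i x y p q = 0 := by
  simp only [hypMat, of_apply, Fin.ext_iff, Fin.lt_def]
  split_ifs <;> first | omega | rfl

local notation "𝐗" => hypMat N i (Function.update (fun k : Fin N => d k) i c) y

theorem natSingle_vecMul_hypMat_of_lt {p : ℕ} (hp : p < i) :
    natSingle ℂ N p ᵥ* aeval 𝐗 (X - C (d p)) = natSingle ℂ N (p + 1) := by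
  rw [vecMul_aeval_X_sub_C, natSingle_vecMul _ (hp.trans i.isLt)]
  ext q
  simp only [hypMat, of_apply, natSingle, Function.update_apply, Fin.ext_iff, Fin.lt_def,
    Pi.sub_apply, Pi.smul_apply, smul_eq_mul]
  split_ifs <;> first | omega | ring

theorem natSingle_vecMul_hypMat_of_gt {p : ℕ} (hip : i < p) (hp : p < N) :
    natSingle ℂ N p ᵥ* aeval 𝐗 (X - C (d p)) =
      natSingle ℂ N (p + 1) + y (p - 1) • natSingle ℂ N i := by
  rw [vecMul_aeval_X_sub_C, natSingle_vecMul _ hp]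
  ext q
  simp only [hypMat, of_apply, natSingle, Function.update_apply, Fin.ext_iff, Fin.lt_def,
    Pi.add_apply, Pi.sub_apply, Pi.smul_apply, smul_eq_mul]
  split_ifs <;> first | omega | ring

theorem natSingle_eq_vecMul_aeval_prodXSubC {p : ℕ} (hp : p ≤ i) :
    natSingle ℂ N p = natSingle ℂ N 0 ᵥ* aeval 𝐗 (prodXSubC d p) := by
  induction p with
  | zero => simp [prodXSubC]
  | succ p ih =>
    rw [prodXSubC, prod_range_succ, map_mul, ← vecMul_vecMul, ← prodXSubC, ← ih (by omega),
      natSingle_vecMul_hypMat_of_lt i d y c (by omega)]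

theorem natSingle_vecMul_hypMat_self :
    natSingle ℂ N i ᵥ* aeval 𝐗 (X - C c) = natSingle ℂ N (i + 1) +
      natSingle ℂ N 0 ᵥ* aeval 𝐗 (∑ q ∈ range i, C (y q) * prodXSubC d q) := by
  have hrow : natSingle ℂ N i ᵥ* aeval 𝐗 (X - C c) =
      natSingle ℂ N (i + 1) + ∑ q ∈ range i, y q • natSingle ℂ N q := by
    rw [vecMul_aeval_X_sub_C, natSingle_vecMul _ i.isLt]
    ext q
    simp only [hypMat, of_apply, natSingle, Function.update_apply, Fin.ext_iff, Fin.lt_def,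
      Pi.add_apply, Pi.sub_apply, Pi.smul_apply, smul_eq_mul, Finset.sum_apply, mul_ite, mul_one,
      mul_zero, sum_ite_eq, mem_range, true_and]
    split_ifs <;> first | omega | ring
  rw [hrow, map_sum, vecMul_sum]
  congr 1
  refine sum_congr rfl fun q hq => ?_
  rw [C_mul', map_smul, vecMul_smul,
    ← natSingle_eq_vecMul_aeval_prodXSubC i d y c (mem_range.mp hq).le]

/-- Reflecting `d` turns the products `∏_{p<k<N} (X - C (d k))` into initial segments of a single
sequence. -/
theorem natSingle_vecMul_aeval_prodXSubC_reflect {j : ℕ} (hj : j ≤ N - 1 - i) :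
    natSingle ℂ N (N - j) ᵥ* aeval 𝐗 (prodXSubC (fun k => d (N - 1 - k)) j) =
      natSingle ℂ N i ᵥ* aeval 𝐗
        (∑ l ∈ range j, C (y (N - 2 - l)) * prodXSubC (fun k => d (N - 1 - k)) l) := by
  induction j with
  | zero => simp [prodXSubC, natSingle_of_le]
  | succ j ih =>
    have hi := i.isLt
    rw [prodXSubC, prod_range_succ, mul_comm, map_mul, ← vecMul_vecMul, ← prodXSubC,
      show N - (j + 1) = N - 1 - j by omega,
      natSingle_vecMul_hypMat_of_gt i d y c (by omega) (by omega), add_vecMul,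
      show N - 1 - j + 1 = N - j by omega, ih (by omega), sum_range_succ, map_add, vecMul_add]
    congr 1
    rw [C_mul', map_smul, vecMul_smul, smul_vecMul, show N - 1 - j - 1 = N - 2 - j by omega]

theorem natSingle_zero_vecMul_aeval_hypMat :
    natSingle ℂ N 0 ᵥ* aeval 𝐗
      ((X - C c) * prodXSubC d i * prodXSubC (fun k => d (N - 1 - k)) (N - 1 - i)
        - (∑ q ∈ range i, C (y q) * prodXSubC d q) *
            prodXSubC (fun k => d (N - 1 - k)) (N - 1 - i)
        - (∑ l ∈ range (N - 1 - i), C (y (N - 2 - l)) * prodXSubC (fun k => d (N - 1 - k)) l) *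
            prodXSubC d i) = 0 := by
  set P := prodXSubC d i
  set Q := prodXSubC (fun k => d (N - 1 - k)) (N - 1 - i)
  set R := ∑ q ∈ range i, C (y q) * prodXSubC d q
  set S := ∑ l ∈ range (N - 1 - i), C (y (N - 2 - l)) * prodXSubC (fun k => d (N - 1 - k)) l
  have hP : natSingle ℂ N 0 ᵥ* aeval 𝐗 P = natSingle ℂ N i :=
    (natSingle_eq_vecMul_aeval_prodXSubC i d y c le_rfl).symm
  have hQ : natSingle ℂ N (i + 1) ᵥ* aeval 𝐗 Q = natSingle ℂ N i ᵥ* aeval 𝐗 S := by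
    rw [← natSingle_vecMul_aeval_prodXSubC_reflect i d y c le_rfl]
    congr 2
    have := i.isLt
    omega
  have hPXQ : natSingle ℂ N 0 ᵥ* aeval 𝐗 (P * (X - C c) * Q) =
      natSingle ℂ N (i + 1) ᵥ* aeval 𝐗 Q + natSingle ℂ N 0 ᵥ* aeval 𝐗 R ᵥ* aeval 𝐗 Q := by
    rw [map_mul, map_mul, ← vecMul_vecMul, ← vecMul_vecMul, hP,
      natSingle_vecMul_hypMat_self, add_vecMul]
  have hRQ :
      natSingle ℂ N 0 ᵥ* aeval 𝐗 (R * Q) = natSingle ℂ N 0 ᵥ* aeval 𝐗 R ᵥ* aeval 𝐗 Q := by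
    rw [map_mul, vecMul_vecMul]
  have hPS : natSingle ℂ N 0 ᵥ* aeval 𝐗 (P * S) = natSingle ℂ N (i + 1) ᵥ* aeval 𝐗 Q := by
    rw [map_mul, ← vecMul_vecMul, hP, hQ]
  rw [show (X - C c) * P * Q - R * Q - S * P = P * (X - C c) * Q - R * Q - P * S by ring,
    map_sub, map_sub, vecMul_sub, vecMul_sub, hPXQ, hRQ, hPS]
  abel

end HypMat

theorem exists_hypMat_pow_eq_zero {N : ℕ} (i : Fin N) (d : ℕ → ℂ)
    (hd : ∀ a < (i : ℕ), ∀ b, (i : ℕ) < b → b < N → d a ≠ d b) :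
    ∃ (c : ℂ) (y : ℕ → ℂ),
      hypMat N i (Function.update (fun k : Fin N => d k) i c) y ^ N = 0 := by
  have hi := i.isLt
  have hPQ : IsCoprime (prodXSubC d i) (prodXSubC (fun k => d (N - 1 - k)) (N - 1 - i)) :=
    isCoprime_prodXSubC fun a ha b hb => hd a ha _ (by omega) (by omega)
  obtain ⟨c, R, S, hR, hS, hRS⟩ :=
    exists_X_sub_C_mul_mul_sub_eq_X_pow (monic_prodXSubC _ _) (monic_prodXSubC _ _) hPQ
  rw [natDegree_prodXSubC, natDegree_prodXSubC, show (i : ℕ) + (N - 1 - i) + 1 = N by omega]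
    at hRS
  obtain ⟨y, hyR, hyS⟩ := exists_sum_C_mul_prodXSubC_eq_and_reflect d
    (hR.trans_eq (degree_prodXSubC _ _)) (hS.trans_eq (degree_prodXSubC _ _))
  have hrow := natSingle_zero_vecMul_aeval_hypMat i d y c
  rw [hyR, hyS, hRS, map_pow, aeval_X, natSingle_vecMul _ (by omega)] at hrow
  exact ⟨c, y, eq_zero_of_commute_of_row_zero (hypMat_apply_of_eq_add_one i y _)
    (hypMat_apply_of_add_one_lt i y _) (Commute.self_pow _ _)
    fun p hp => by rwa [show p = ⟨0, by omega⟩ from Fin.ext hp]⟩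

theorem stmt_1_general (N : ℕ) (i : Fin N) (x : Fin N → ℂ)
    (hx : ∀ j j' : Fin N, j < i → i < j' → x j ≠ x j') :
    ∃ xi : ℂ, ∃ y : ℕ → ℂ, ∀ lam : ℂ,
      (lam • (1 : Matrix (Fin N) (Fin N) ℂ) + hypMat N i (Function.update x i xi) y).det =
        lam ^ N := by
  set d : ℕ → ℂ := fun k => if h : k < N then x ⟨k, h⟩ else 0
  have hxd : x = fun k : Fin N => d k := funext fun k => by simp [d]
  obtain ⟨c, y, hnil⟩ := exists_hypMat_pow_eq_zero i d fun a ha b hib hb => by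
    simpa [d, hb, (ha.trans hib).trans hb] using
      hx ⟨a, by omega⟩ ⟨b, hb⟩ (Fin.lt_def.mpr ha) (Fin.lt_def.mpr hib)
  rw [← hxd] at hnil
  exact ⟨c, y, fun lam => by simpa using det_smul_one_add_of_isNilpotent ⟨N, hnil⟩ lam⟩

/-- Lemma 5.6: given `x_j` (`j ≠ i`) with `x_j ≠ x_{j'}` whenever `j < i < j'`, there exist a
value `xᵢ` for the remaining diagonal entry and `y₁, …, y_{N-1}` such that
`det(λ I_N + X) = λ^N`, i.e. `X` is nilpotent with characteristic polynomial `λ^N`. -/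
theorem stmt_1 (N : ℕ) (hN : 1 < N) (i : Fin N) (x : Fin N → ℂ)
    (hx : ∀ j j' : Fin N, j < i → i < j' → x j ≠ x j') :
    ∃ xi : ℂ, ∃ y : ℕ → ℂ, ∀ lam : ℂ,
      (lam • (1 : Matrix (Fin N) (Fin N) ℂ) + hypMat N i (Function.update x i xi) y).det =
        lam ^ N :=
  stmt_1_general N i x hx
end

section
/- Let $G$ be of type $A_n$ or $C_n$, $M$ the admissible Levi with $\Delta_M = \{\alpha_{n-m+1},\dots,\alpha_n\}$ and $d = h_M$. Let $\pi$ be the projection of a root to its $\Delta_M^c$-part (i.e. $\pi(\sum_{\alpha\in\Delta_G} n_\alpha \alpha) = \sum_{\alpha\in\Delta_M^c} n_\alpha \alpha$). Then $\pi$ restricted to $\Phi(\mathfrak{u}_0) = \{\gamma \in \Phi_G^+ : d \mid \mathrm{Ht}(\gamma)\}$ is injective. -/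
/-- The fundamental character `χᵢ`, realized in `ℤ^N`. -/
def chiV (N : ℕ) (i : Fin N) : Fin N → ℤ := Pi.single i 1

/-- Positive roots of type `Aₙ` (in `ℤ^{n+1}`). -/
def posA (n : ℕ) : Set (Fin (n + 1) → ℤ) :=
  {v | ∃ i j : Fin (n + 1), i < j ∧ v = chiV (n + 1) i - chiV (n + 1) j}

/-- Positive roots of type `Cₙ`. -/
def posC (n : ℕ) : Set (Fin n → ℤ) :=
  {v | ∃ i j : Fin n, (i < j ∧ v = chiV n i - chiV n j) ∨ (i ≤ j ∧ v = chiV n i + chiV n j)}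

/-- The height functional in type `Aₙ`. -/
def htA (n : ℕ) (v : Fin (n + 1) → ℤ) : ℤ := ∑ l : Fin (n + 1), ((n : ℤ) - (l : ℕ)) * v l

/-- Twice the height functional in type `Cₙ`. -/
def htC2 (n : ℕ) (v : Fin n → ℤ) : ℤ := ∑ l : Fin n, (2 * (n : ℤ) - 2 * (l : ℕ) - 1) * v l

/-- The coefficient of `v` at the simple root `α_l` (0-indexed): the partial sum `∑_{j ≤ l} v j`. -/
def psum (N : ℕ) (v : Fin N → ℤ) (l : Fin N) : ℤ :=
  ∑ j ∈ Finset.univ.filter (· ≤ l), v j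

/-!
Write a positive root as `εᵢ + s εⱼ` with `i ≤ j` and `s = ±1`. Its coefficients at
`α₀, …, α_{K-1}` (`K = n - m`) are partial sums of its coordinates, so `π` determines the
coordinates below `K`. A height divisible by `d` is at least `d`, which forces `i < K`; then `i`
is read off from `π` as the first nonzero coordinate, and `(s, j)` likewise whenever `j < K`.
If both `j`s lie in the Levi block `j ≥ K`, the two heights differ by less than `d`
(at most `Ht θ_M`), so they are equal, and this pins down `(s, j)`.
-/

open Finset

/-- `IsSignedPair i j s` says that `εᵢ + s εⱼ` is a positive root of type `C`; those of type `A`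
are the ones with `s = -1`. -/
def IsSignedPair {N : ℕ} (i j : Fin N) (s : ℤ) : Prop :=
  s = 1 ∧ i ≤ j ∨ s = -1 ∧ i < j

section SignedPair

variable {N : ℕ}

lemma chiV_apply (i l : Fin N) : chiV N i l = if l = i then 1 else 0 :=
  Pi.single_apply i 1 l

lemma sum_mul_chiV_add_smul (c : Fin N → ℤ) (i j : Fin N) (s : ℤ) :
    ∑ l, c l * (chiV N i + s • chiV N j) l = c i + s * c j := by
  simp [chiV_apply, mul_add, sum_add_distrib, mul_comm s]

lemma psum_eq_sum_Iic (v : Fin N → ℤ) (l : Fin N) : psum N v l = ∑ j ∈ Iic l, v j := by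
  rw [psum, filter_ge_eq_Iic]

lemma apply_eq_of_psum_eq {K : ℕ} {v w : Fin N → ℤ}
    (h : ∀ l : Fin N, (l : ℕ) < K → psum N v l = psum N w l) (l : Fin N) (hl : (l : ℕ) < K) :
    v l = w l := by
  induction l using WellFoundedLT.induction with
  | _ l ih =>
    have hlow : ∑ j ∈ Iio l, v j = ∑ j ∈ Iio l, w j :=
      sum_congr rfl fun j hj => ih j (mem_Iio.1 hj) (lt_trans (Fin.lt_def.1 (mem_Iio.1 hj)) hl)
    have hl' := h l hl
    rw [psum_eq_sum_Iic, psum_eq_sum_Iic, ← Iio_insert, sum_insert notMem_Iio_self,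
      sum_insert notMem_Iio_self, hlow] at hl'
    exact add_right_cancel hl'

variable {i j i₁ j₁ i₂ j₂ : Fin N} {s s₁ s₂ : ℤ}

lemma IsSignedPair.sign (h : IsSignedPair i j s) : s = 1 ∨ s = -1 := by
  rcases h with h | h
  exacts [.inl h.1, .inr h.1]

lemma IsSignedPair.apply_of_lt (h : IsSignedPair i j s) {l : Fin N} (hl : l < i) :
    (chiV N i + s • chiV N j) l = 0 := by
  have hij : i ≤ j := by rcases h with h | h; exacts [h.2, h.2.le]
  simp [chiV_apply, hl.ne, (hl.trans_le hij).ne]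

lemma IsSignedPair.apply_self_ne_zero (h : IsSignedPair i j s) :
    (chiV N i + s • chiV N j) i ≠ 0 := by
  rcases h with ⟨rfl, -⟩ | ⟨rfl, hij⟩
  · by_cases hij : i = j <;> simp [chiV_apply, hij]
  · simp [chiV_apply, hij.ne]

-- `i` is the first nonzero coordinate of `εᵢ + s εⱼ`.
lemma IsSignedPair.fst_eq {K : ℕ} (h₁ : IsSignedPair i₁ j₁ s₁) (h₂ : IsSignedPair i₂ j₂ s₂)
    (hi₁ : (i₁ : ℕ) < K) (hi₂ : (i₂ : ℕ) < K)
    (hagree : ∀ l : Fin N, (l : ℕ) < K →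
      (chiV N i₁ + s₁ • chiV N j₁) l = (chiV N i₂ + s₂ • chiV N j₂) l) :
    i₁ = i₂ := by
  rcases lt_trichotomy i₁ i₂ with hlt | heq | hgt
  · exact absurd ((hagree i₁ hi₁).trans (h₂.apply_of_lt hlt)) h₁.apply_self_ne_zero
  · exact heq
  · exact absurd ((hagree i₂ hi₂).symm.trans (h₁.apply_of_lt hgt)) h₂.apply_self_ne_zero

lemma snd_eq_of_agree {K : ℕ} (hs₁ : s₁ = 1 ∨ s₁ = -1) (hs₂ : s₂ = 1 ∨ s₂ = -1)
    (hagree : ∀ l : Fin N, (l : ℕ) < K →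
      (chiV N i + s₁ • chiV N j₁) l = (chiV N i + s₂ • chiV N j₂) l)
    (hj₁ : (j₁ : ℕ) < K) :
    s₁ = s₂ ∧ j₁ = j₂ := by
  have h := hagree j₁ hj₁
  by_cases hj : j₁ = j₂
  · subst hj
    simpa [chiV_apply] using h
  · simp [chiV_apply, hj] at h
    omega

lemma IsSignedPair.eq_of_agree {K : ℕ} (h₁ : IsSignedPair i₁ j₁ s₁) (h₂ : IsSignedPair i₂ j₂ s₂)
    (hi₁ : (i₁ : ℕ) < K) (hi₂ : (i₂ : ℕ) < K)
    (hagree : ∀ l : Fin N, (l : ℕ) < K →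
      (chiV N i₁ + s₁ • chiV N j₁) l = (chiV N i₂ + s₂ • chiV N j₂) l)
    (htail : i₁ = i₂ → K ≤ j₁ → K ≤ j₂ → s₁ = s₂ ∧ j₁ = j₂) :
    chiV N i₁ + s₁ • chiV N j₁ = chiV N i₂ + s₂ • chiV N j₂ := by
  obtain rfl := h₁.fst_eq h₂ hi₁ hi₂ hagree
  obtain ⟨rfl, rfl⟩ : s₁ = s₂ ∧ j₁ = j₂ := by
    rcases lt_or_ge (j₁ : ℕ) K with hj₁ | hj₁
    · exact snd_eq_of_agree h₁.sign h₂.sign hagree hj₁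
    rcases lt_or_ge (j₂ : ℕ) K with hj₂ | hj₂
    · exact (snd_eq_of_agree h₂.sign h₁.sign (fun l hl => (hagree l hl).symm) hj₂).imp
        Eq.symm Eq.symm
    exact htail rfl hj₁ hj₂
  rfl

end SignedPair

section TypeA

variable {n m : ℕ}

lemma exists_lt_of_mem_posA {γ : Fin (n + 1) → ℤ} (hγ : γ ∈ posA n) :
    ∃ i j, i < j ∧ γ = chiV (n + 1) i + (-1 : ℤ) • chiV (n + 1) j := by
  obtain ⟨i, j, hij, rfl⟩ := hγ
  exact ⟨i, j, hij, by rw [neg_one_smul, sub_eq_add_neg]⟩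

lemma htA_chiV_add_smul (i j : Fin (n + 1)) (s : ℤ) :
    htA n (chiV (n + 1) i + s • chiV (n + 1) j) = (n - i) + s * (n - j) :=
  sum_mul_chiV_add_smul _ i j s

lemma lt_sub_of_dvd_htA {i j : Fin (n + 1)} (hij : i < j)
    (hd : (m + 1 : ℤ) ∣ htA n (chiV (n + 1) i + (-1 : ℤ) • chiV (n + 1) j)) :
    (i : ℕ) < n - m := by
  rw [htA_chiV_add_smul] at hd
  have := Int.le_of_dvd (by omega) hd
  omega

theorem eq_of_psum_eq_of_mem_posA {γ₁ γ₂ : Fin (n + 1) → ℤ} (hγ₁ : γ₁ ∈ posA n)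
    (hγ₂ : γ₂ ∈ posA n) (hd₁ : (m + 1 : ℤ) ∣ htA n γ₁) (hd₂ : (m + 1 : ℤ) ∣ htA n γ₂)
    (hπ : ∀ l : Fin (n + 1), (l : ℕ) < n - m → psum (n + 1) γ₁ l = psum (n + 1) γ₂ l) :
    γ₁ = γ₂ := by
  obtain ⟨i₁, j₁, h₁, rfl⟩ := exists_lt_of_mem_posA hγ₁
  obtain ⟨i₂, j₂, h₂, rfl⟩ := exists_lt_of_mem_posA hγ₂
  refine IsSignedPair.eq_of_agree (.inr ⟨rfl, h₁⟩) (.inr ⟨rfl, h₂⟩) (lt_sub_of_dvd_htA h₁ hd₁)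
    (lt_sub_of_dvd_htA h₂ hd₂) (apply_eq_of_psum_eq hπ) ?_
  rintro rfl hj₁ hj₂
  rw [htA_chiV_add_smul] at hd₁ hd₂
  have := Int.eq_zero_of_abs_lt_dvd (dvd_sub hd₁ hd₂) (abs_lt.2 ⟨by omega, by omega⟩)
  exact ⟨rfl, Fin.ext (by omega)⟩

end TypeA

section TypeC

variable {n m : ℕ}

lemma exists_isSignedPair_of_mem_posC {γ : Fin n → ℤ} (hγ : γ ∈ posC n) :
    ∃ i j s, IsSignedPair i j s ∧ γ = chiV n i + s • chiV n j := by
  obtain ⟨i, j, ⟨hij, rfl⟩ | ⟨hij, rfl⟩⟩ := hγ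
  · exact ⟨i, j, -1, .inr ⟨rfl, hij⟩, by rw [neg_one_smul, sub_eq_add_neg]⟩
  · exact ⟨i, j, 1, .inl ⟨rfl, hij⟩, by rw [one_smul]⟩

lemma htC2_chiV_add_smul (i j : Fin n) (s : ℤ) :
    htC2 n (chiV n i + s • chiV n j) = (2 * n - 2 * i - 1) + s * (2 * n - 2 * j - 1) :=
  sum_mul_chiV_add_smul _ i j s

lemma IsSignedPair.lt_sub_of_dvd_htC2 {i j : Fin n} {s : ℤ} (h : IsSignedPair i j s)
    (hd : 2 * (2 * (m : ℤ)) ∣ htC2 n (chiV n i + s • chiV n j)) :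
    (i : ℕ) < n - m := by
  rw [htC2_chiV_add_smul] at hd
  rcases h with ⟨rfl, hij⟩ | ⟨rfl, hij⟩ <;>
  · have := Int.le_of_dvd (by omega) hd
    omega

theorem eq_of_psum_eq_of_mem_posC {γ₁ γ₂ : Fin n → ℤ} (hγ₁ : γ₁ ∈ posC n)
    (hγ₂ : γ₂ ∈ posC n) (hd₁ : 2 * (2 * (m : ℤ)) ∣ htC2 n γ₁)
    (hd₂ : 2 * (2 * (m : ℤ)) ∣ htC2 n γ₂)
    (hπ : ∀ l : Fin n, (l : ℕ) < n - m → psum n γ₁ l = psum n γ₂ l) :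
    γ₁ = γ₂ := by
  obtain ⟨i₁, j₁, s₁, h₁, rfl⟩ := exists_isSignedPair_of_mem_posC hγ₁
  obtain ⟨i₂, j₂, s₂, h₂, rfl⟩ := exists_isSignedPair_of_mem_posC hγ₂
  refine h₁.eq_of_agree h₂ (h₁.lt_sub_of_dvd_htC2 hd₁) (h₂.lt_sub_of_dvd_htC2 hd₂)
    (apply_eq_of_psum_eq hπ) ?_
  rintro rfl hj₁ hj₂
  rw [htC2_chiV_add_smul] at hd₁ hd₂
  -- For `j ≥ n - m` the weight `2n - 2j - 1` lies in `[1, 2m - 1]`, so the twice-heights differ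
  -- by less than `4m`; a difference `0` then forces equal signs.
  rcases h₁.sign with rfl | rfl <;> rcases h₂.sign with rfl | rfl <;>
  · have := Int.eq_zero_of_abs_lt_dvd (dvd_sub hd₁ hd₂) (abs_lt.2 ⟨by omega, by omega⟩)
    exact ⟨by omega, Fin.ext (by omega)⟩

end TypeC


theorem stmt_9_general (n m : ℕ) :
    (∀ γ₁ ∈ posA n, ∀ γ₂ ∈ posA n,
      ((m : ℤ) + 1) ∣ htA n γ₁ → ((m : ℤ) + 1) ∣ htA n γ₂ →
      (∀ l : Fin (n + 1), (l : ℕ) < n - m → psum (n + 1) γ₁ l = psum (n + 1) γ₂ l) →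
      γ₁ = γ₂) ∧
    (∀ γ₁ ∈ posC n, ∀ γ₂ ∈ posC n,
      (2 * (2 * (m : ℤ))) ∣ htC2 n γ₁ → (2 * (2 * (m : ℤ))) ∣ htC2 n γ₂ →
      (∀ l : Fin n, (l : ℕ) < n - m → psum n γ₁ l = psum n γ₂ l) →
      γ₁ = γ₂) :=
  ⟨fun _ hγ₁ _ hγ₂ => eq_of_psum_eq_of_mem_posA hγ₁ hγ₂,
    fun _ hγ₁ _ hγ₂ => eq_of_psum_eq_of_mem_posC hγ₁ hγ₂⟩

/-- In types `A` and `C`, the projection `π` to the `Δ_M^c`-part (the coefficients at the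
simple roots `α_l`, `l < n-m` 0-indexed) is injective on
`Φ(𝔲₀) = {γ ∈ Φ⁺ : d ∣ Ht(γ)}`, where `d = h_M` (`= m+1` in type A, `= 2m` in type C). -/
theorem stmt_9 (n m : ℕ) (hm : 1 ≤ m) (hmn : m ≤ n) :
    (∀ γ₁ ∈ posA n, ∀ γ₂ ∈ posA n,
      ((m : ℤ) + 1) ∣ htA n γ₁ → ((m : ℤ) + 1) ∣ htA n γ₂ →
      (∀ l : Fin (n + 1), (l : ℕ) < n - m → psum (n + 1) γ₁ l = psum (n + 1) γ₂ l) →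
      γ₁ = γ₂) ∧
    (∀ γ₁ ∈ posC n, ∀ γ₂ ∈ posC n,
      (2 * (2 * (m : ℤ))) ∣ htC2 n γ₁ → (2 * (2 * (m : ℤ))) ∣ htC2 n γ₂ →
      (∀ l : Fin n, (l : ℕ) < n - m → psum n γ₁ l = psum n γ₂ l) →
      γ₁ = γ₂) :=
  stmt_9_general n m
end

section
/- Let $G$ be a classical group, $M$ an admissible Levi with Coxeter number $d = h_M$, and $\pi$ the projection of roots to their $\Delta_M^c$-part. If $\gamma_1, \gamma_2 \in \Phi(\mathfrak{u}_0) = \{\gamma \in \Phi_G^+ : d \mid \mathrm{Ht}(\gamma)\}$ satisfy $\pi(\gamma_1) = \pi(\gamma_2)$, then either $\mathrm{Ht}(\gamma_1) = \mathrm{Ht}(\gamma_2)$, or $G$ is of type B or D and $|\mathrm{Ht}(\gamma_1) - \mathrm{Ht}(\gamma_2)| = d$. -/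
/-- Positive roots of type `Bₙ`. -/
def posB (n : ℕ) : Set (Fin n → ℤ) :=
  {v | (∃ i : Fin n, v = chiV n i) ∨
    ∃ i j : Fin n, i < j ∧ (v = chiV n i - chiV n j ∨ v = chiV n i + chiV n j)}

/-- Positive roots of type `Dₙ`. -/
def posD (n : ℕ) : Set (Fin n → ℤ) :=
  {v | ∃ i j : Fin n, i < j ∧ (v = chiV n i - chiV n j ∨ v = chiV n i + chiV n j)}

/-- The height functional in type `Bₙ`. -/
def htB (n : ℕ) (v : Fin n → ℤ) : ℤ := ∑ l : Fin n, ((n : ℤ) - (l : ℕ)) * v l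

/-- The height functional in type `Dₙ`. -/
def htD (n : ℕ) (v : Fin n → ℤ) : ℤ := ∑ l : Fin n, ((n : ℤ) - 1 - (l : ℕ)) * v l

/-! The coefficient of a root at the simple root `α_l` is the partial sum `psum` of its
coordinates, and in each type the height is a fixed nonnegative weighting `lastWeight` of
these coefficients. If `π(γ₁) = π(γ₂)`, the coefficients agree off `Δ_M`, while a single
coefficient lies in `[0, 1]` (type A) or `[0, 2]` (types B, C, D). Hence the heights differ by
at most the weight of the `Δ_M`-part times that range: `m < m + 1` in type A, `4m - 2 < 4m`
for twice the height in type C, and exactly `d` in types B and D. As `d` divides both heights,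
the difference is `0`, or `±d` in types B and D. -/

def lastWeight (N : ℕ) (c₁ c₂ : ℤ) (k : Fin N) : ℤ :=
  if (k : ℕ) = N - 1 then c₁ else c₂

section Weights

variable {N : ℕ}

theorem sum_filter_lastWeight (c₁ c₂ : ℤ) {a : ℕ} (ha : a < N) :
    ∑ k : Fin N with a ≤ k.val, lastWeight N c₁ c₂ k = (N - 1 - a : ℕ) * c₂ + c₁ := by
  obtain ⟨M, rfl⟩ : ∃ M, N = M + 1 := ⟨N - 1, by omega⟩
  have hIco : (Finset.range M).filter (a ≤ ·) = Finset.Ico a M := by ext; simp; omega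
  rw [Finset.sum_filter, Fin.sum_univ_castSucc]
  simp only [lastWeight, Fin.val_castSucc, Fin.val_last, Nat.add_sub_cancel,
    if_pos (by omega : a ≤ M)]
  rw [Fin.sum_univ_eq_sum_range (fun i => if a ≤ i then (if i = M then c₁ else c₂) else 0),
    Finset.sum_congr rfl (g := fun i => if a ≤ i then c₂ else 0), ← Finset.sum_filter, hIco]
  · simp
  · intro i hi
    simp [(Finset.mem_range.mp hi).ne]

theorem sum_mul_psum (w v : Fin N → ℤ) :
    ∑ k, w k * psum N v k = ∑ l, (∑ k : Fin N with l.val ≤ k.val, w k) * v l := by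
  simp only [psum, Finset.mul_sum, Finset.sum_mul, Finset.sum_filter, ite_mul, zero_mul,
    mul_ite, mul_zero, Fin.le_def]
  rw [Finset.sum_comm]

theorem sum_lastWeight_mul_psum (c₁ c₂ : ℤ) (v : Fin N → ℤ) :
    ∑ k, lastWeight N c₁ c₂ k * psum N v k =
      ∑ l : Fin N, ((N - 1 - l : ℕ) * c₂ + c₁) * v l := by
  rw [sum_mul_psum]
  exact Finset.sum_congr rfl fun l _ => by rw [sum_filter_lastWeight c₁ c₂ l.isLt]

theorem abs_sum_mul_psum_sub_le {w : Fin N → ℤ} (hw : ∀ k, 0 ≤ w k) {v₁ v₂ : Fin N → ℤ}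
    {a : ℕ} {c : ℤ} (heq : ∀ l : Fin N, (l : ℕ) < a → psum N v₁ l = psum N v₂ l)
    (hc : ∀ l, |psum N v₁ l - psum N v₂ l| ≤ c) :
    |∑ k, w k * psum N v₁ k - ∑ k, w k * psum N v₂ k| ≤
      (∑ k : Fin N with a ≤ k.val, w k) * c := by
  rw [← Finset.sum_sub_distrib, Finset.sum_mul, Finset.sum_filter]
  refine (Finset.abs_sum_le_sum_abs _ _).trans (Finset.sum_le_sum fun k _ => ?_)
  rw [← mul_sub, abs_mul, abs_of_nonneg (hw k)]
  split_ifs with hk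
  · exact mul_le_mul_of_nonneg_left (hc k) (hw k)
  · rw [heq k (by omega), sub_self, abs_zero, mul_zero]

theorem abs_sum_lastWeight_mul_psum_sub_le {c₁ c₂ c : ℤ} (hc₁ : 0 ≤ c₁) (hc₂ : 0 ≤ c₂)
    {v₁ v₂ : Fin N → ℤ} (hv₁ : ∀ l, psum N v₁ l ∈ Set.Icc 0 c)
    (hv₂ : ∀ l, psum N v₂ l ∈ Set.Icc 0 c)
    {a : ℕ} (ha : a < N) (heq : ∀ l : Fin N, (l : ℕ) < a → psum N v₁ l = psum N v₂ l) :
    |∑ k, lastWeight N c₁ c₂ k * psum N v₁ k -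
        ∑ k, lastWeight N c₁ c₂ k * psum N v₂ k|
      ≤ ((N - 1 - a : ℕ) * c₂ + c₁) * c := by
  have hw : ∀ k, 0 ≤ lastWeight N c₁ c₂ k := fun k => by
    unfold lastWeight; split_ifs <;> assumption
  have hc : ∀ l, |psum N v₁ l - psum N v₂ l| ≤ c := fun l =>
    abs_sub_le_of_nonneg_of_le (hv₁ l).1 (hv₁ l).2 (hv₂ l).1 (hv₂ l).2
  rw [← sum_filter_lastWeight c₁ c₂ ha]
  exact abs_sum_mul_psum_sub_le hw heq hc

end Weights

theorem htA_eq (n : ℕ) (v : Fin (n + 1) → ℤ) :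
    htA n v = ∑ k, lastWeight (n + 1) 0 1 k * psum (n + 1) v k := by
  rw [sum_lastWeight_mul_psum, htA]
  refine Finset.sum_congr rfl fun l _ => ?_
  have := l.isLt
  congr 1; omega

theorem htB_eq (n : ℕ) (v : Fin n → ℤ) :
    htB n v = ∑ k, lastWeight n 1 1 k * psum n v k := by
  rw [sum_lastWeight_mul_psum, htB]
  refine Finset.sum_congr rfl fun l _ => ?_
  have := l.isLt
  congr 1; omega

theorem htC2_eq (n : ℕ) (v : Fin n → ℤ) :
    htC2 n v = ∑ k, lastWeight n 1 2 k * psum n v k := by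
  rw [sum_lastWeight_mul_psum, htC2]
  refine Finset.sum_congr rfl fun l _ => ?_
  have := l.isLt
  congr 1; omega

theorem htD_eq (n : ℕ) (v : Fin n → ℤ) :
    htD n v = ∑ k, lastWeight n 0 1 k * psum n v k := by
  rw [sum_lastWeight_mul_psum, htD]
  refine Finset.sum_congr rfl fun l _ => ?_
  have := l.isLt
  congr 1; omega

section Roots

variable {N : ℕ}

theorem psum_add (v w : Fin N → ℤ) (l : Fin N) :
    psum N (v + w) l = psum N v l + psum N w l := by
  simp [psum, Finset.sum_add_distrib]

theorem psum_sub (v w : Fin N → ℤ) (l : Fin N) :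
    psum N (v - w) l = psum N v l - psum N w l := by
  simp [psum, Finset.sum_sub_distrib]

theorem psum_chiV (i l : Fin N) : psum N (chiV N i) l = if i ≤ l then 1 else 0 := by
  simp [psum, chiV, Pi.single_apply]

theorem psum_chiV_mem_Icc (i l : Fin N) : psum N (chiV N i) l ∈ Set.Icc 0 1 := by
  rw [psum_chiV]; split_ifs <;> simp

theorem psum_chiV_sub_mem_Icc {i j : Fin N} (hij : i < j) (l : Fin N) :
    psum N (chiV N i - chiV N j) l ∈ Set.Icc 0 1 := by
  rw [psum_sub, psum_chiV, psum_chiV]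
  split_ifs with hi hj hj
  all_goals first | exact absurd (hij.le.trans hj) hi | simp

theorem psum_chiV_add_mem_Icc (i j l : Fin N) : psum N (chiV N i + chiV N j) l ∈ Set.Icc 0 2 := by
  rw [psum_add, psum_chiV, psum_chiV]; split_ifs <;> simp

theorem psum_mem_Icc_of_mem_posA {n : ℕ} {v : Fin (n + 1) → ℤ} (hv : v ∈ posA n)
    (l : Fin (n + 1)) :
    psum (n + 1) v l ∈ Set.Icc 0 1 := by
  obtain ⟨i, j, hij, rfl⟩ := hv
  exact psum_chiV_sub_mem_Icc hij l

theorem psum_mem_Icc_of_mem_posB {n : ℕ} {v : Fin n → ℤ} (hv : v ∈ posB n) (l : Fin n) :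
    psum n v l ∈ Set.Icc 0 2 := by
  rcases hv with ⟨i, rfl⟩ | ⟨i, j, hij, rfl | rfl⟩
  · exact Set.Icc_subset_Icc_right one_le_two (psum_chiV_mem_Icc i l)
  · exact Set.Icc_subset_Icc_right one_le_two (psum_chiV_sub_mem_Icc hij l)
  · exact psum_chiV_add_mem_Icc i j l

theorem psum_mem_Icc_of_mem_posC {n : ℕ} {v : Fin n → ℤ} (hv : v ∈ posC n) (l : Fin n) :
    psum n v l ∈ Set.Icc 0 2 := by
  rcases hv with ⟨i, j, ⟨hij, rfl⟩ | ⟨-, rfl⟩⟩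
  · exact Set.Icc_subset_Icc_right one_le_two (psum_chiV_sub_mem_Icc hij l)
  · exact psum_chiV_add_mem_Icc i j l

theorem psum_mem_Icc_of_mem_posD {n : ℕ} {v : Fin n → ℤ} (hv : v ∈ posD n) (l : Fin n) :
    psum n v l ∈ Set.Icc 0 2 := by
  rcases hv with ⟨i, j, hij, rfl | rfl⟩
  · exact Set.Icc_subset_Icc_right one_le_two (psum_chiV_sub_mem_Icc hij l)
  · exact psum_chiV_add_mem_Icc i j l

end Roots

theorem abs_htA_sub_le {n m : ℕ} (hmn : m ≤ n) {γ₁ γ₂ : Fin (n + 1) → ℤ}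
    (h₁ : γ₁ ∈ posA n) (h₂ : γ₂ ∈ posA n)
    (heq : ∀ l : Fin (n + 1), (l : ℕ) < n - m → psum (n + 1) γ₁ l = psum (n + 1) γ₂ l) :
    |htA n γ₁ - htA n γ₂| ≤ m := by
  rw [htA_eq, htA_eq]
  refine (abs_sum_lastWeight_mul_psum_sub_le le_rfl zero_le_one (psum_mem_Icc_of_mem_posA h₁)
    (psum_mem_Icc_of_mem_posA h₂) (by omega) heq).trans_eq ?_
  omega

theorem abs_htB_sub_le {n m : ℕ} (hm : 1 ≤ m) (hmn : m ≤ n) {γ₁ γ₂ : Fin n → ℤ}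
    (h₁ : γ₁ ∈ posB n) (h₂ : γ₂ ∈ posB n)
    (heq : ∀ l : Fin n, (l : ℕ) < n - m → psum n γ₁ l = psum n γ₂ l) :
    |htB n γ₁ - htB n γ₂| ≤ 2 * m := by
  rw [htB_eq, htB_eq]
  refine (abs_sum_lastWeight_mul_psum_sub_le zero_le_one zero_le_one (psum_mem_Icc_of_mem_posB h₁)
    (psum_mem_Icc_of_mem_posB h₂) (by omega) heq).trans_eq ?_
  omega

theorem abs_htC2_sub_le {n m : ℕ} (hm : 1 ≤ m) (hmn : m ≤ n) {γ₁ γ₂ : Fin n → ℤ}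
    (h₁ : γ₁ ∈ posC n) (h₂ : γ₂ ∈ posC n)
    (heq : ∀ l : Fin n, (l : ℕ) < n - m → psum n γ₁ l = psum n γ₂ l) :
    |htC2 n γ₁ - htC2 n γ₂| ≤ 4 * m - 2 := by
  rw [htC2_eq, htC2_eq]
  refine (abs_sum_lastWeight_mul_psum_sub_le zero_le_one zero_le_two (psum_mem_Icc_of_mem_posC h₁)
    (psum_mem_Icc_of_mem_posC h₂) (by omega) heq).trans_eq ?_
  omega

theorem abs_htD_sub_le {n m : ℕ} (hm : 1 ≤ m) (hmn : m ≤ n) {γ₁ γ₂ : Fin n → ℤ}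
    (h₁ : γ₁ ∈ posD n) (h₂ : γ₂ ∈ posD n)
    (heq : ∀ l : Fin n, (l : ℕ) < n - m → psum n γ₁ l = psum n γ₂ l) :
    |htD n γ₁ - htD n γ₂| ≤ 2 * m - 2 := by
  rw [htD_eq, htD_eq]
  refine (abs_sum_lastWeight_mul_psum_sub_le le_rfl zero_le_one (psum_mem_Icc_of_mem_posD h₁)
    (psum_mem_Icc_of_mem_posD h₂) (by omega) heq).trans_eq ?_
  omega

theorem eq_or_abs_sub_eq_of_dvd_of_abs_sub_le {d x y : ℤ} (hx : d ∣ x) (hy : d ∣ y)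
    (h : |x - y| ≤ d) : x = y ∨ |x - y| = d := by
  obtain ⟨c, hc⟩ := dvd_sub hx hy
  rcases ((abs_nonneg _).trans h).eq_or_lt with rfl | hd
  · exact Or.inl (sub_eq_zero.mp (by simpa using hc))
  have hc1 : |c| ≤ 1 := by
    rw [hc, abs_mul, abs_of_pos hd] at h
    nlinarith
  rw [hc, abs_mul, abs_of_pos hd, ← sub_eq_zero (a := x), hc, mul_eq_zero]
  rcases abs_le.mp hc1 with ⟨hc₁, hc₂⟩
  interval_cases c <;> simp [hd.ne']

/-- For a classical group with admissible Levi `M` and `d = h_M`: if `γ₁, γ₂ ∈ Φ(𝔲₀)`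
(positive roots with `d ∣ Ht`) have the same projection to the `Δ_M^c`-part, then either
`Ht(γ₁) = Ht(γ₂)` or (only possible in types `B` and `D`) `|Ht(γ₁) - Ht(γ₂)| = d`. -/
theorem stmt_10 (n m : ℕ) (hm : 1 ≤ m) (hmn : m ≤ n) :
    (∀ γ₁ ∈ posA n, ∀ γ₂ ∈ posA n,
      ((m : ℤ) + 1) ∣ htA n γ₁ → ((m : ℤ) + 1) ∣ htA n γ₂ →
      (∀ l : Fin (n + 1), (l : ℕ) < n - m → psum (n + 1) γ₁ l = psum (n + 1) γ₂ l) →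
      htA n γ₁ = htA n γ₂) ∧
    (∀ γ₁ ∈ posB n, ∀ γ₂ ∈ posB n,
      (2 * (m : ℤ)) ∣ htB n γ₁ → (2 * (m : ℤ)) ∣ htB n γ₂ →
      (∀ l : Fin n, (l : ℕ) < n - m → psum n γ₁ l = psum n γ₂ l) →
      htB n γ₁ = htB n γ₂ ∨ |htB n γ₁ - htB n γ₂| = 2 * (m : ℤ)) ∧
    (∀ γ₁ ∈ posC n, ∀ γ₂ ∈ posC n,
      (2 * (2 * (m : ℤ))) ∣ htC2 n γ₁ → (2 * (2 * (m : ℤ))) ∣ htC2 n γ₂ →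
      (∀ l : Fin n, (l : ℕ) < n - m → psum n γ₁ l = psum n γ₂ l) →
      htC2 n γ₁ = htC2 n γ₂) ∧
    (3 ≤ m → ∀ γ₁ ∈ posD n, ∀ γ₂ ∈ posD n,
      (2 * (m : ℤ) - 2) ∣ htD n γ₁ → (2 * (m : ℤ) - 2) ∣ htD n γ₂ →
      (∀ l : Fin n, (l : ℕ) < n - m → psum n γ₁ l = psum n γ₂ l) →
      htD n γ₁ = htD n γ₂ ∨ |htD n γ₁ - htD n γ₂| = 2 * (m : ℤ) - 2) := by
  refine ⟨?_, ?_, ?_, ?_⟩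
  · intro γ₁ h₁ γ₂ h₂ hd₁ hd₂ heq
    refine sub_eq_zero.mp (Int.eq_zero_of_abs_lt_dvd (dvd_sub hd₁ hd₂) ?_)
    linarith [abs_htA_sub_le hmn h₁ h₂ heq]
  · intro γ₁ h₁ γ₂ h₂ hd₁ hd₂ heq
    exact eq_or_abs_sub_eq_of_dvd_of_abs_sub_le hd₁ hd₂ (abs_htB_sub_le hm hmn h₁ h₂ heq)
  · intro γ₁ h₁ γ₂ h₂ hd₁ hd₂ heq
    refine sub_eq_zero.mp (Int.eq_zero_of_abs_lt_dvd (dvd_sub hd₁ hd₂) ?_)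
    linarith [abs_htC2_sub_le hm hmn h₁ h₂ heq]
  · intro _ γ₁ h₁ γ₂ h₂ hd₁ hd₂ heq
    exact eq_or_abs_sub_eq_of_dvd_of_abs_sub_le hd₁ hd₂ (abs_htD_sub_le hm hmn h₁ h₂ heq)
end

section
/- Let $\mathcal{O} = \mathbb{C}[[s]]$, $K = \mathbb{C}((s))$, and fix integers $d_1 \le \dots \le d_n$ (fundamental degrees) and $d \ge 1$. For the admissible-Levi lattice $\mathfrak{j}^+ \subset \mathfrak{g}(K)$ with perpendicular lattice decomposition $DK^*((\mathfrak{j}^+)^\perp) = (\mathfrak{m}_{-1}u^{-1} \oplus \mathfrak{u}_\phi^\perp \oplus \prod_{j\ge 1}\mathfrak{g}_j u^j)\frac{du}{u}$ over the degree-$d$ extension $K' = \mathbb{C}((u))$, $s = u^d$: for any $X \frac{du}{u} \in DK^*((\mathfrak{j}^+)^\perp)$ viewed as a matrix of Laurent series in $u$, the $d_i$-th coefficient $c_{d_i}(X)$ of the characteristic polynomial (a sum of products of $d_i$ matrix entries with at most $d$ factors coming from the $u^{-1}$-part) has $u$-adic valuation $\ge -2d_i$ when $d_i < d$ and $\ge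 -d_i - d$ when $d_i \ge d$. -/
open Matrix

/-!
In the Leibniz expansion of `charpoly (-X) = det (t + X)`, the term of a permutation `σ` is
`± ∏ i, (C (X (σ i) i) + [σ i = i] t)`, so its coefficient of `t ^ (N - k)` is a sum of products of
`k` entries taken from distinct rows and columns. Two lower bounds on its valuation follow from one
estimate for products of polynomials: if the `e`-th coefficient of `f i` has valuation
`≥ a i + e • b`, then the `c`-th coefficient of `∏ i, f i` has valuation `≥ ∑ i, a i + c • b`.
With `a i = -1, b = 1` it gives `≥ -k`; with `b = 0` and `a i = -1` or `0` according as the entry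
`(σ i, i)` has a `u⁻¹` term or not, it gives `≥ -#{such entries} ≥ -d`.
-/

section

open Polynomial

namespace AddValuation

variable {R Γ₀ : Type*} [CommRing R] [LinearOrderedAddCommMonoidWithTop Γ₀] (v : AddValuation R Γ₀)

theorem le_map_coeff_mul {p q : R[X]} {a a' b : Γ₀}
    (hp : ∀ e, a + e • b ≤ v (p.coeff e)) (hq : ∀ e, a' + e • b ≤ v (q.coeff e)) (c : ℕ) :
    a + a' + c • b ≤ v ((p * q).coeff c) := by
  rw [coeff_mul]
  refine v.map_le_sum fun x hx => ?_
  rw [Finset.HasAntidiagonal.mem_antidiagonal] at hx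
  rw [v.map_mul, ← hx, add_smul, add_add_add_comm]
  exact add_le_add (hp _) (hq _)

theorem le_map_coeff_prod {ι : Type*} {s : Finset ι} {f : ι → R[X]} {a : ι → Γ₀} {b : Γ₀}
    (hf : ∀ i ∈ s, ∀ e, a i + e • b ≤ v ((f i).coeff e)) (c : ℕ) :
    ∑ i ∈ s, a i + c • b ≤ v ((∏ i ∈ s, f i).coeff c) := by
  induction s using Finset.cons_induction generalizing c with
  | empty =>
    rcases eq_or_ne c 0 with rfl | hc
    · simp [v.map_one]
    · simp [coeff_one, hc]
  | cons i s hi ih =>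
    rw [Finset.sum_cons, Finset.prod_cons]
    exact v.le_map_coeff_mul (hf i (Finset.mem_cons_self i s))
      (ih fun i' hi' => hf i' (Finset.mem_cons_of_mem hi')) c

theorem le_map_coeff_C_add_C_mul_X {x y : R} {a b : Γ₀} (hx : a ≤ v x) (hy : a + b ≤ v y)
    (e : ℕ) : a + e • b ≤ v ((C x + C y * X).coeff e) := by
  rcases e with _ | _ | e
  · simpa using hx
  · simpa using hy
  · simp

theorem le_map_coeff_det {n : Type*} [Fintype n] [DecidableEq n] (A : Matrix n n R[X]) {g : Γ₀}
    {c : ℕ} (h : ∀ σ : Equiv.Perm n, g ≤ v ((∏ i, A (σ i) i).coeff c)) :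
    g ≤ v (A.det.coeff c) := by
  rw [det_apply, finsetSum_coeff]
  refine v.map_le_sum fun σ _ => ?_
  rcases Int.units_eq_one_or (Equiv.Perm.sign σ) with hσ | hσ <;> simp [hσ, v.map_neg, h σ]

theorem zero_le_map_one_apply {n : Type*} [DecidableEq n] (i j : n) :
    0 ≤ v ((1 : Matrix n n R) i j) := by
  rw [one_apply]
  split_ifs
  · rw [v.map_one]
  · rw [v.map_zero]
    exact le_top

end AddValuation

theorem Matrix.charmatrix_neg_apply {R n : Type*} [CommRing R] [Fintype n] [DecidableEq n]
    (M : Matrix n n R) (i j : n) :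
    charmatrix (-M) i j = C (M i j) + C ((1 : Matrix n n R) i j) * X := by
  by_cases h : i = j
  · subst h
    simp [add_comm]
  · simp [h]

namespace AddValuation

variable {R n : Type*} [CommRing R] [Fintype n] [DecidableEq n] (v : AddValuation R (WithTop ℤ))
  {M : Matrix n n R}

theorem sub_card_le_map_coeff_charpoly_neg (hM : ∀ i j, ((-1 : ℤ) : WithTop ℤ) ≤ v (M i j))
    (c : ℕ) : (((c : ℤ) - Fintype.card n : ℤ) : WithTop ℤ) ≤ v ((-M).charpoly.coeff c) := by
  refine v.le_map_coeff_det _ fun σ => ?_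
  have h := v.le_map_coeff_prod (s := Finset.univ) (a := fun _ => ((-1 : ℤ) : WithTop ℤ))
    (b := ((1 : ℤ) : WithTop ℤ)) (f := fun i => charmatrix (-M) (σ i) i)
    (fun i _ => by
      rw [charmatrix_neg_apply]
      exact v.le_map_coeff_C_add_C_mul_X (hM _ _)
        (by simpa using v.zero_le_map_one_apply (σ i) i)) c
  convert h using 1
  rw [← WithTop.coe_sum, ← WithTop.coe_nsmul, ← WithTop.coe_add, WithTop.coe_inj]
  simp
  ring

theorem neg_ncard_le_map_coeff_charpoly_neg (hM : ∀ i j, ((-1 : ℤ) : WithTop ℤ) ≤ v (M i j))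
    {S : Set (n × n)} (hS : ∀ i j, (i, j) ∉ S → 0 ≤ v (M i j)) (c : ℕ) :
    ((-S.ncard : ℤ) : WithTop ℤ) ≤ v ((-M).charpoly.coeff c) := by
  classical
  refine v.le_map_coeff_det _ fun σ => ?_
  have h := v.le_map_coeff_prod (s := Finset.univ) (b := 0)
    (f := fun i => charmatrix (-M) (σ i) i)
    (a := fun i => ((if (σ i, i) ∈ S then -1 else 0 : ℤ) : WithTop ℤ))
    (fun i _ => by
      rw [charmatrix_neg_apply]
      refine v.le_map_coeff_C_add_C_mul_X ?_ ?_
      · split_ifs with hi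
        · exact hM _ _
        · exact hS _ _ hi
      · rw [add_zero]
        exact le_trans
          (WithTop.coe_le_coe.2 (by split_ifs <;> norm_num) : _ ≤ ((0 : ℤ) : WithTop ℤ))
          (v.zero_le_map_one_apply (σ i) i)) c
  refine le_trans ?_ h
  rw [smul_zero, add_zero, ← WithTop.coe_sum, WithTop.coe_le_coe, Finset.sum_ite]
  simp only [Finset.sum_neg_distrib, Finset.sum_const_zero, add_zero, Finset.sum_const,
    nsmul_eq_mul, mul_one, neg_le_neg_iff, Nat.cast_le]
  rw [← Set.ncard_coe_finset]
  exact Set.ncard_le_ncard_of_injOn (fun i => (σ i, i)) (by simp)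
    fun _ _ _ _ h => (Prod.ext_iff.1 h).2

end AddValuation

end

theorem stmt_14_general (N d : ℕ)
    (X : Matrix (Fin N) (Fin N) (LaurentSeries ℂ))
    (hval : ∀ p q : Fin N, ∀ j : ℤ, j < -1 → (X p q).coeff j = 0)
    (hcard : Set.ncard {pq : Fin N × Fin N | (X pq.1 pq.2).coeff (-1) ≠ 0} ≤ d) :
    ∀ k : ℕ, k ≤ N → ∀ j : ℤ,
      j < (if k < d then -(2 * (k : ℤ)) else -(k : ℤ) - (d : ℤ)) →
      (((-X).charpoly).coeff (N - k)).coeff j = 0 := by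
  intro k hk j hj
  set v := HahnSeries.addVal ℤ ℂ
  set S : Set (Fin N × Fin N) := {pq | (X pq.1 pq.2).coeff (-1) ≠ 0}
  have hX (p q : Fin N) : ((-1 : ℤ) : WithTop ℤ) ≤ v (X p q) := by
    rw [HahnSeries.addVal_apply, HahnSeries.le_orderTop_iff_forall]
    exact_mod_cast hval p q
  have hS (p q : Fin N) (hpq : (p, q) ∉ S) : 0 ≤ v (X p q) := by
    rw [HahnSeries.addVal_apply, HahnSeries.le_orderTop_iff_forall]
    intro i hi
    obtain h | rfl : i < -1 ∨ i = -1 := by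
      have : i < 0 := by exact_mod_cast hi
      omega
    · exact hval p q i h
    · simpa [S] using hpq
  apply HahnSeries.coeff_eq_zero_of_lt_orderTop
  rw [← HahnSeries.addVal_apply]
  split_ifs at hj
  · refine lt_of_lt_of_le ?_ (v.sub_card_le_map_coeff_charpoly_neg hX (N - k))
    rw [Fintype.card_fin]
    exact_mod_cast (by omega : j < ((N - k : ℕ) : ℤ) - N)
  · refine lt_of_lt_of_le ?_ (v.neg_ncard_le_map_coeff_charpoly_neg hX hS _)
    exact_mod_cast (by omega : j < -(S.ncard : ℤ))

/-- The key valuation estimate of Lemma 5.3: let `X` be a matrix over `ℂ((u))` of the form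
`X = X₋₁ u⁻¹ + X₀ + ∑_{j≥1} Xⱼ uʲ` (all entries have valuation `≥ -1`), where the polar part
`X₋₁` has at most `d` nonzero entries, all in distinct rows and distinct columns. Then the
coefficient `c_k` of `λ^{N-k}` in `det(λ I + X)` has `u`-adic valuation `≥ -2k` when `k < d`
and `≥ -k - d` when `k ≥ d`. -/
theorem stmt_14 (N d : ℕ) (hd : 1 ≤ d)
    (X : Matrix (Fin N) (Fin N) (LaurentSeries ℂ))
    (hval : ∀ p q : Fin N, ∀ j : ℤ, j < -1 → (X p q).coeff j = 0)
    (hcard : Set.ncard {pq : Fin N × Fin N | (X pq.1 pq.2).coeff (-1) ≠ 0} ≤ d)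
    (hdistinct : ∀ p q p' q' : Fin N,
      (X p q).coeff (-1) ≠ 0 → (X p' q').coeff (-1) ≠ 0 → (p = p' ↔ q = q')) :
    ∀ k : ℕ, k ≤ N → ∀ j : ℤ,
      j < (if k < d then -(2 * (k : ℤ)) else -(k : ℤ) - (d : ℤ)) →
      (((-X).charpoly).coeff (N - k)).coeff j = 0 :=
  stmt_14_general N d X hval hcard
end

section
/- Let $U$ and $H \subseteq U$ be smooth affine algebraic groups over a field $k$ of characteristic zero (or $p$ large), with $U$ unipotent, and suppose a torus $S$ acts on $U$ by group automorphisms preserving $H$, fixing only the identity, such that there exists a cocharacter $\lambda: \mathbb{G}_m \to S$ acting with strictly positive weights on $\mathrm{Lie}(U)$. If $V \subseteq U$ is an $S$-stable smooth closed subscheme containing $e$ with $\mathrm{Lie}(V) \oplus \mathrm{Lie}(H) = \mathrm{Lie}(U)$ (as $S$-modules), then the multiplication map $V \times H \to U$ is an isomorphism of schemes. -/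
/-- `f` is a polynomial map `𝔸ᵃ → 𝔸ᴺ`. -/
def IsPolyMap {a N : ℕ} (f : (Fin a → ℂ) → (Fin N → ℂ)) : Prop :=
  ∃ P : Fin N → MvPolynomial (Fin a) ℂ, ∀ x i, f x i = MvPolynomial.eval x (P i)

/-- `μ` is a polynomial map `𝔸ᴺ × 𝔸ᴺ → 𝔸ᴺ`. -/
def IsPolyMap2 {N : ℕ} (μ : (Fin N → ℂ) → (Fin N → ℂ) → (Fin N → ℂ)) : Prop :=
  ∃ P : Fin N → MvPolynomial (Fin N ⊕ Fin N) ℂ,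
    ∀ x y i, μ x y i = MvPolynomial.eval (Sum.elim x y) (P i)

/-- The linearized `𝔾ₘ`-action with weights `w`: `(c • x) i = c^(w i) * x i`. -/
def scaleWt {N : ℕ} (w : Fin N → ℕ) (c : ℂ) (x : Fin N → ℂ) : Fin N → ℂ :=
  fun i => c ^ w i * x i

/-!
Let `F` be a `𝔾ₘ`-equivariant polynomial map, with positive weights on the source, whose
differential `T` at `0` is bijective. Composed with `T⁻¹` it becomes `z ↦ z + E z`, with `E`
polynomial, equivariant and with vanishing linear part. Each coordinate `E_j` is then weighted
homogeneous of degree `w j` without linear monomials, and since all weights are positive it only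
involves coordinates of strictly smaller weight. Hence `u = z + E z` is solved by the triangular
recursion `z = u - E z`, whose Picard iterates are polynomial in `u` and stabilize after
`max w + 1` steps. For the multiplication map `(v, h) ↦ μ (φ v) (ψ h)` the differential at `0`
is `Lφ ⊕ Lψ`, because the differential of a unital multiplication at the unit is addition.
-/

open MvPolynomial Function

theorem MvPolynomial.eval_bind₁ {R σ τ : Type*} [CommSemiring R] (z : τ → R)
    (g : σ → MvPolynomial τ R) (p : MvPolynomial σ R) :
    eval z (bind₁ g p) = eval (fun i => eval z (g i)) p :=
  eval₂Hom_bind₁ _ _ _ _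

section PolynomialMap

variable {R : Type*} [CommRing R] {σ τ υ : Type*}

def IsPolynomialMap (F : (σ → R) → (τ → R)) : Prop :=
  ∃ P : τ → MvPolynomial σ R, ∀ z i, F z i = eval z (P i)

theorem IsPolynomialMap.comp {G : (τ → R) → (υ → R)} {F : (σ → R) → (τ → R)}
    (hG : IsPolynomialMap G) (hF : IsPolynomialMap F) : IsPolynomialMap (G ∘ F) := by
  obtain ⟨Q, hQ⟩ := hG
  obtain ⟨P, hP⟩ := hF
  refine ⟨fun i => bind₁ P (Q i), fun z i => ?_⟩
  rw [Function.comp_apply, hQ, eval_bind₁, funext (hP z)]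

theorem IsPolynomialMap.sub {F G : (σ → R) → (τ → R)} (hF : IsPolynomialMap F)
    (hG : IsPolynomialMap G) : IsPolynomialMap fun z => F z - G z := by
  obtain ⟨P, hP⟩ := hF
  obtain ⟨Q, hQ⟩ := hG
  exact ⟨fun i => P i - Q i, fun z i => by simp [hP, hQ]⟩

theorem IsPolynomialMap.sumElim {F : (σ → R) → (τ → R)} {G : (σ → R) → (υ → R)}
    (hF : IsPolynomialMap F) (hG : IsPolynomialMap G) :
    IsPolynomialMap fun z => Sum.elim (F z) (G z) := by
  obtain ⟨P, hP⟩ := hF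
  obtain ⟨Q, hQ⟩ := hG
  exact ⟨Sum.elim P Q, fun z => Sum.rec (hP z) (hQ z)⟩

theorem LinearMap.isPolynomialMap [Fintype σ] (L : (σ → R) →ₗ[R] (τ → R)) :
    IsPolynomialMap L := by
  classical
  exact ⟨fun i => ∑ k, C (L.toMatrix' i k) * X k, fun z i => by
    rw [← L.toMatrix'_mulVec z]; simp [Matrix.mulVec, dotProduct]⟩

theorem isPolynomialMap_id [Fintype σ] : IsPolynomialMap (id : (σ → R) → (σ → R)) :=
  LinearMap.id.isPolynomialMap

theorem isPolynomialMap_comp_left [Fintype σ] (f : τ → σ) :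
    IsPolynomialMap fun z : σ → R => z ∘ f :=
  (LinearMap.funLeft R R f).isPolynomialMap

end PolynomialMap

section Weights

variable {R : Type*} [CommRing R] {σ : Type*}

theorem MvPolynomial.bind₁_C_pow_mul_X_monomial (w : σ → ℕ) (c : R) (u : σ →₀ ℕ) (a : R) :
    bind₁ (fun j => C (c ^ w j) * X j) (monomial u a) =
      monomial u (c ^ Finsupp.weight w u * a) := by
  rw [bind₁_monomial]
  simp only [mul_pow, ← C_pow, ← pow_mul, Finset.prod_mul_distrib, ← map_prod,
    Finset.prod_pow_eq_pow_sum, prod_X_pow_eq_monomial]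
  rw [← mul_assoc, ← C_mul, C_mul_monomial, mul_one, Finsupp.weight_apply, Finsupp.sum]
  simp [mul_comm]

theorem MvPolynomial.coeff_bind₁_C_pow_mul_X (w : σ → ℕ) (c : R) (p : MvPolynomial σ R)
    (m : σ →₀ ℕ) :
    coeff m (bind₁ (fun j => C (c ^ w j) * X j) p) = c ^ Finsupp.weight w m * coeff m p := by
  classical
  induction p using MvPolynomial.induction_on' with
  | monomial u a =>
    rw [bind₁_C_pow_mul_X_monomial, coeff_monomial, coeff_monomial]
    split_ifs with h
    · rw [h]
    · rw [mul_zero]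
  | add p q hp hq => rw [map_add, coeff_add, hp, hq, coeff_add, mul_add]

theorem MvPolynomial.isWeightedHomogeneous_of_eval_pow_mul {K : Type*} [Field K] [CharZero K]
    {w : σ → ℕ} {p : MvPolynomial σ K} {d : ℕ}
    (h : ∀ (c : K) (z : σ → K), eval (fun j => c ^ w j * z j) p = c ^ d * eval z p) :
    IsWeightedHomogeneous w p d := by
  intro m hm
  -- compare coefficients of the rescaling by `c = 2`; in characteristic zero `2 ^ ·` is injective
  have hscale : bind₁ (fun j => C ((2 : K) ^ w j) * X j) p = C (2 ^ d) * p := by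
    refine MvPolynomial.funext fun z => ?_
    simpa [eval_bind₁] using h 2 z
  have h2 : (2 : K) ^ Finsupp.weight w m = 2 ^ d := by
    have := congrArg (coeff m) hscale
    rw [coeff_bind₁_C_pow_mul_X, coeff_C_mul] at this
    exact mul_right_cancel₀ hm this
  exact Nat.pow_right_injective le_rfl (by exact_mod_cast h2)

theorem MvPolynomial.IsWeightedHomogeneous.weight_lt_of_mem_vars {w : σ → ℕ} (hw : ∀ i, 0 < w i)
    {p : MvPolynomial σ R} {d : ℕ} (hp : IsWeightedHomogeneous w p d)
    (hlin : ∀ k, coeff (Finsupp.single k 1) p = 0) {k : σ} (hk : k ∈ p.vars) : w k < d := by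
  obtain ⟨m, hm, hkm⟩ := (mem_vars_iff_mem_support k).1 hk
  have hmk : m k ≠ 0 := Finsupp.mem_support_iff.1 hkm
  have hsplit := Finsupp.weight_sub_single_add (w := w) hmk
  rw [hp (mem_support_iff.1 hm)] at hsplit
  by_contra hle
  have := Finsupp.nonTorsionWeight_of ℕ w fun i => (hw i).ne'
  have hzero : m - Finsupp.single k 1 = 0 :=
    (Finsupp.weight_eq_zero_iff_eq_zero w).1 (by omega)
  have hm1 : m = Finsupp.single k 1 := by
    rw [← Finsupp.sub_add_single_one_cancel hmk, hzero, zero_add]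
  exact mem_support_iff.1 hm (hm1 ▸ hlin k)

end Weights

section Triangular

variable {σ M : Type*} [AddCommGroup M] {w : σ → ℕ} {E : (σ → M) → (σ → M)}

def picardIter (E : (σ → M) → (σ → M)) (u : σ → M) : ℕ → σ → M
  | 0 => u
  | n + 1 => u - E (picardIter E u n)

theorem picardIter_succ_apply_of_lt (hE : ∀ j, DependsOn (E · j) {k | w k < w j})
    (u : σ → M) {n : ℕ} {j : σ} (hj : w j < n) :
    picardIter E u (n + 1) j = picardIter E u n j := by
  induction n generalizing j with
  | zero => omega
  | succ n ih =>
    show u j - E (picardIter E u (n + 1)) j = u j - E (picardIter E u n) j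
    exact congrArg (u j - ·) (hE j fun k (hk : w k < w j) => ih (by omega))

theorem eq_of_eq_sub_of_eq_sub (hE : ∀ j, DependsOn (E · j) {k | w k < w j})
    {u x y : σ → M} (hx : x = u - E x) (hy : y = u - E y) : x = y := by
  funext j
  induction hj : w j using Nat.strong_induction_on generalizing j with
  | _ n ih =>
    rw [hx, hy, Pi.sub_apply, Pi.sub_apply]
    exact congrArg (u j - ·) (hE j fun k (hk : w k < w j) => ih _ (hj ▸ hk) k rfl)

theorem IsPolynomialMap.picardIter {R : Type*} [CommRing R] [Fintype σ]
    {E : (σ → R) → (σ → R)} (hE : IsPolynomialMap E) (n : ℕ) :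
    IsPolynomialMap fun u => picardIter E u n := by
  induction n with
  | zero => exact isPolynomialMap_id
  | succ n ih => exact isPolynomialMap_id.sub (hE.comp ih)

theorem exists_polynomial_inverse_add {R : Type*} [CommRing R] [Fintype σ]
    {E : (σ → R) → (σ → R)} (hE : IsPolynomialMap E)
    (hlow : ∀ j, DependsOn (E · j) {k | w k < w j}) :
    ∃ H, IsPolynomialMap H ∧ LeftInverse H (fun z => z + E z) ∧
      RightInverse H (fun z => z + E z) := by
  set D := Finset.univ.sup w + 1
  have hfix : ∀ u, picardIter E u D = u - E (picardIter E u D) := fun u => funext fun j =>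
    (picardIter_succ_apply_of_lt hlow u
      (Nat.lt_succ_of_le (Finset.le_sup (Finset.mem_univ j)))).symm
  refine ⟨fun u => picardIter E u D, hE.picardIter D, fun z => ?_, fun u => ?_⟩
  · exact eq_of_eq_sub_of_eq_sub hlow (hfix _) (add_sub_cancel_right z (E z)).symm
  · exact eq_sub_iff_add_eq.mp (hfix u)

end Triangular

section Derivative

variable {𝕜 : Type*} [NontriviallyNormedField 𝕜]

theorem MvPolynomial.hasFDerivAt_eval_zero {σ : Type*} [Fintype σ] (p : MvPolynomial σ 𝕜) :
    HasFDerivAt (fun z => eval z p)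
      (∑ k, coeff (Finsupp.single k 1) p • ContinuousLinearMap.proj k : (σ → 𝕜) →L[𝕜] 𝕜) 0 := by
  classical
  induction p using MvPolynomial.induction_on with
  | C a =>
    refine (hasFDerivAt_const a 0).congr_of_eventuallyEq (.of_forall fun z => eval_C a)
      |>.congr_fderiv (ContinuousLinearMap.ext fun z => ?_)
    simp [coeff_C, eq_comm (a := (0 : σ →₀ ℕ))]
  | add p q hp hq =>
    refine (hp.add hq).congr_of_eventuallyEq (.of_forall fun z => eval_add)
      |>.congr_fderiv (ContinuousLinearMap.ext fun z => ?_)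
    simp [add_mul, Finset.sum_add_distrib]
  | mul_X p j hp =>
    have hcoeff : ∀ k, coeff (Finsupp.single k 1) (p * X j) =
        if k = j then coeff 0 p else 0 := by
      intro k
      rw [coeff_mul_X']
      by_cases hk : k = j
      · simp [hk]
      · simp [hk, Ne.symm hk]
    refine (hp.mul (hasFDerivAt_apply j 0)).congr_of_eventuallyEq (.of_forall fun z => by simp)
      |>.congr_fderiv (ContinuousLinearMap.ext fun z => ?_)
    simp only [sum_apply, smul_apply, ContinuousLinearMap.proj_apply,
      hcoeff, smul_eq_mul, ite_mul, zero_mul, Finset.sum_ite_eq', Finset.mem_univ, if_true]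
    simp [constantCoeff_eq]

theorem HasFDerivAt.apply_single_eq_coeff {σ τ : Type*} [Fintype σ] [DecidableEq σ]
    {F : (σ → 𝕜) → (τ → 𝕜)} {P : τ → MvPolynomial σ 𝕜} (hP : ∀ z i, F z i = eval z (P i))
    {T : (σ → 𝕜) →L[𝕜] (τ → 𝕜)} (hT : HasFDerivAt F T 0) (k : σ) (i : τ) :
    T (Pi.single k 1) i = coeff (Finsupp.single k 1) (P i) := by
  have hFi : HasFDerivAt (fun z => eval z (P i)) ((ContinuousLinearMap.proj i).comp T) 0 := by
    simpa only [← hP] using hasFDerivAt_pi'.1 hT i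
  rw [← ContinuousLinearMap.proj_apply (R := 𝕜) i (T (Pi.single k 1)),
    ← ContinuousLinearMap.comp_apply, hFi.unique (hasFDerivAt_eval_zero (P i))]
  simp [Pi.single_apply]

theorem HasFDerivAt.semiconj {E F : Type*} [NormedAddCommGroup E] [NormedSpace 𝕜 E]
    [NormedAddCommGroup F] [NormedSpace 𝕜 F] {f : E → F} {T : E →L[𝕜] F} (hT : HasFDerivAt f T 0)
    {A : E →L[𝕜] E} {B : F →L[𝕜] F} (h : Semiconj f A B) : Semiconj T A B := by
  have hA : HasFDerivAt (f ∘ A) (T.comp A) 0 := by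
    simpa using (map_zero A ▸ hT).comp (0 : E) A.hasFDerivAt
  have hB : HasFDerivAt (B ∘ f) (B.comp T) 0 := B.hasFDerivAt.comp 0 hT
  have hfA : f ∘ A = B ∘ f := funext h
  intro z
  exact congrArg (· z) (hA.unique (hfA ▸ hB) :)

theorem hasFDerivAt_fst_add_snd_of_unital {E : Type*} [NormedAddCommGroup E] [NormedSpace 𝕜 E]
    {m : E × E → E} (hm : DifferentiableAt 𝕜 m 0) (hl : ∀ x, m (0, x) = x)
    (hr : ∀ x, m (x, 0) = x) :
    HasFDerivAt m (ContinuousLinearMap.fst 𝕜 E E + ContinuousLinearMap.snd 𝕜 E E) 0 := by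
  set D := fderiv 𝕜 m 0
  have hD : HasFDerivAt m D 0 := hm.hasFDerivAt
  have hinl : D.comp (ContinuousLinearMap.inl 𝕜 E E) = ContinuousLinearMap.id 𝕜 E :=
    ((map_zero (ContinuousLinearMap.inl 𝕜 E E) ▸ hD).comp (0 : E)
      (ContinuousLinearMap.inl 𝕜 E E).hasFDerivAt).unique
      ((hasFDerivAt_id 0).congr_of_eventuallyEq (.of_forall fun x => hr x))
  have hinr : D.comp (ContinuousLinearMap.inr 𝕜 E E) = ContinuousLinearMap.id 𝕜 E :=
    ((map_zero (ContinuousLinearMap.inr 𝕜 E E) ▸ hD).comp (0 : E)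
      (ContinuousLinearMap.inr 𝕜 E E).hasFDerivAt).unique
      ((hasFDerivAt_id 0).congr_of_eventuallyEq (.of_forall fun x => hl x))
  convert hD using 1
  refine ContinuousLinearMap.ext fun ⟨u, v⟩ => ?_
  have hu : D (u, 0) = u := congrArg (· u) hinl
  have hv : D (0, v) = v := congrArg (· v) hinr
  calc u + v = D ((u, 0) + (0, v)) := by rw [map_add, hu, hv]
    _ = D (u, v) := by simp

theorem IsPolynomialMap.differentiable [CompleteSpace 𝕜] {σ τ : Type*} [Fintype σ]
    {F : (σ → 𝕜) → (τ → 𝕜)} (hF : IsPolynomialMap F) : Differentiable 𝕜 F := by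
  obtain ⟨P, hP⟩ := hF
  rw [show F = fun z i => eval z (P i) from funext fun z => funext (hP z)]
  exact differentiable_pi.2 fun i z =>
    (AnalyticOnNhd.eval_mvPolynomial (P i) z trivial).differentiableAt

theorem hasFDerivAt_coprod_of_unital {E F G : Type*} [NormedAddCommGroup E] [NormedSpace 𝕜 E]
    [NormedAddCommGroup F] [NormedSpace 𝕜 F] [NormedAddCommGroup G] [NormedSpace 𝕜 G]
    {m : E × E → E} (hm : DifferentiableAt 𝕜 m 0) (hl : ∀ x, m (0, x) = x)
    (hr : ∀ x, m (x, 0) = x) {φ : F → E} {ψ : G → E} {Lφ : F →L[𝕜] E} {Lψ : G →L[𝕜] E}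
    (hφ : HasFDerivAt φ Lφ 0) (hψ : HasFDerivAt ψ Lψ 0) (hφ0 : φ 0 = 0) (hψ0 : ψ 0 = 0) :
    HasFDerivAt (fun p => m (φ p.1, ψ p.2)) (Lφ.coprod Lψ) 0 := by
  have hm' := hasFDerivAt_fst_add_snd_of_unital hm hl hr
  rw [show (0 : E × E) = Prod.map φ ψ 0 from (Prod.ext hφ0 hψ0).symm] at hm'
  refine hm'.comp (0 : F × G) (hφ.prodMap 0 hψ) |>.congr_fderiv
    (ContinuousLinearMap.ext fun _ => ?_)
  simp

end Derivative

section WeightedInverseFunctionTheorem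

variable {𝕜 : Type*} [NontriviallyNormedField 𝕜] {σ τ : Type*}

noncomputable def weightedScale (w : σ → ℕ) (c : 𝕜) : (σ → 𝕜) →L[𝕜] (σ → 𝕜) :=
  ContinuousLinearMap.pi fun i => c ^ w i • ContinuousLinearMap.proj (R := 𝕜) i

@[simp]
theorem weightedScale_apply (w : σ → ℕ) (c : 𝕜) (z : σ → 𝕜) (i : σ) :
    weightedScale w c z i = c ^ w i * z i := rfl

variable [CharZero 𝕜] [Fintype σ]

theorem IsPolynomialMap.dependsOn_lt_weight {w : σ → ℕ} (hw : ∀ i, 0 < w i)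
    {E : (σ → 𝕜) → (σ → 𝕜)} (hE : IsPolynomialMap E)
    (hEw : ∀ c, Semiconj E (weightedScale w c) (weightedScale w c))
    (hE0 : HasFDerivAt (𝕜 := 𝕜) E 0 0) (j : σ) : DependsOn (E · j) {k | w k < w j} := by
  classical
  obtain ⟨Q, hQ⟩ := hE
  have hhom : IsWeightedHomogeneous w (Q j) (w j) :=
    isWeightedHomogeneous_of_eval_pow_mul fun c z => by
      have h := congrFun (hEw c z) j
      rwa [hQ, weightedScale_apply, hQ] at h
  have hlin : ∀ k, coeff (Finsupp.single k 1) (Q j) = 0 := fun k => by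
    simpa using (hE0.apply_single_eq_coeff hQ k j).symm
  intro x y hxy
  simp only [hQ]
  exact eval₂Hom_congr' rfl (fun k hk _ => hxy k (hhom.weight_lt_of_mem_vars hw hlin hk)) rfl

theorem exists_polynomial_inverse_of_hasFDerivAt_zero [Fintype τ] {wσ : σ → ℕ} {wτ : τ → ℕ}
    (hw : ∀ i, 0 < wσ i) {F : (σ → 𝕜) → (τ → 𝕜)} (hF : IsPolynomialMap F)
    (hFw : ∀ c, Semiconj F (weightedScale wσ c) (weightedScale wτ c))
    {T : (σ → 𝕜) →L[𝕜] (τ → 𝕜)} (hT : HasFDerivAt F T 0) (hTbij : Bijective T) :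
    ∃ G, IsPolynomialMap G ∧ LeftInverse G F ∧ RightInverse G F := by
  let L := LinearEquiv.ofBijective (T : (σ → 𝕜) →ₗ[𝕜] (τ → 𝕜)) hTbij
  let M : (τ → 𝕜) →L[𝕜] (σ → 𝕜) := ⟨L.symm.toLinearMap, LinearMap.continuous_on_pi _⟩
  have hTM : ∀ u, T (M u) = u := L.apply_symm_apply
  have hMT : ∀ z, M (T z) = z := L.symm_apply_apply
  have hMpoly : IsPolynomialMap M := M.toLinearMap.isPolynomialMap
  have hMw : ∀ c, Semiconj M (weightedScale wτ c) (weightedScale wσ c) := fun c u => by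
    conv_lhs => rw [← hTM u, ← hT.semiconj (hFw c), hMT]
  let E := fun z => M (F z) - z
  have hE : IsPolynomialMap E := (hMpoly.comp hF).sub isPolynomialMap_id
  have hEw : ∀ c, Semiconj E (weightedScale wσ c) (weightedScale wσ c) := fun c z => by
    simp only [E, hFw c z, hMw c (F z), map_sub]
  have hE0 : HasFDerivAt (𝕜 := 𝕜) E 0 0 := by
    refine (M.hasFDerivAt.comp 0 hT).sub (hasFDerivAt_id 0) |>.congr_fderiv
      (ContinuousLinearMap.ext fun z => ?_)
    simp [hMT]
  obtain ⟨H, hH, hleft, hright⟩ :=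
    exists_polynomial_inverse_add hE (hE.dependsOn_lt_weight hw hEw hE0)
  have hEF : ∀ z, z + E z = M (F z) := fun z => add_sub_cancel z _
  refine ⟨H ∘ M, hH.comp hMpoly, fun z => ?_, fun u => ?_⟩
  · simpa only [comp_apply, hEF] using hleft z
  · simpa only [comp_apply, hEF, hTM] using congrArg T (hright (M u))

end WeightedInverseFunctionTheorem

theorem stmt_17_general (N a b : ℕ)
    (wU : Fin N → ℕ)
    (wV : Fin a → ℕ) (hwV : ∀ i, 0 < wV i)
    (wH : Fin b → ℕ) (hwH : ∀ i, 0 < wH i)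
    (μ : (Fin N → ℂ) → (Fin N → ℂ) → (Fin N → ℂ))
    (hμpoly : IsPolyMap2 μ)
    (hμ_idl : ∀ x, μ 0 x = x) (hμ_idr : ∀ x, μ x 0 = x)
    (hμ_equiv : ∀ c x y, μ (scaleWt wU c x) (scaleWt wU c y) = scaleWt wU c (μ x y))
    (φ : (Fin a → ℂ) → (Fin N → ℂ)) (ψ : (Fin b → ℂ) → (Fin N → ℂ))
    (hφpoly : IsPolyMap φ) (hψpoly : IsPolyMap ψ)
    (hφ0 : φ 0 = 0) (hψ0 : ψ 0 = 0)
    (hφeq : ∀ c x, φ (scaleWt wV c x) = scaleWt wU c (φ x))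
    (hψeq : ∀ c y, ψ (scaleWt wH c y) = scaleWt wU c (ψ y))
    (Lφ : (Fin a → ℂ) →L[ℂ] (Fin N → ℂ)) (Lψ : (Fin b → ℂ) →L[ℂ] (Fin N → ℂ))
    (hLφ : HasFDerivAt φ Lφ 0) (hLψ : HasFDerivAt ψ Lψ 0)
    (hcompl : Function.Bijective fun p : (Fin a → ℂ) × (Fin b → ℂ) => Lφ p.1 + Lψ p.2) :
    Function.Bijective (fun p : (Fin a → ℂ) × (Fin b → ℂ) => μ (φ p.1) (ψ p.2)) ∧
    ∃ ι : (Fin N → ℂ) → (Fin a → ℂ) × (Fin b → ℂ),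
      (∃ P : (Fin a ⊕ Fin b) → MvPolynomial (Fin N) ℂ,
        ∀ u, (∀ i, (ι u).1 i = MvPolynomial.eval u (P (Sum.inl i))) ∧
          ∀ i, (ι u).2 i = MvPolynomial.eval u (P (Sum.inr i))) ∧
      Function.LeftInverse ι (fun p : (Fin a → ℂ) × (Fin b → ℂ) => μ (φ p.1) (ψ p.2)) ∧
      Function.RightInverse ι (fun p : (Fin a → ℂ) × (Fin b → ℂ) => μ (φ p.1) (ψ p.2)) := by
  set f := fun p : (Fin a → ℂ) × (Fin b → ℂ) => μ (φ p.1) (ψ p.2)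
  let eN := ContinuousLinearEquiv.sumPiEquivProdPi ℂ (Fin N) (Fin N) fun _ => ℂ
  let eJ := ContinuousLinearEquiv.sumPiEquivProdPi ℂ (Fin a) (Fin b) fun _ => ℂ
  have hμ : IsPolynomialMap fun w : Fin N ⊕ Fin N → ℂ => μ (w ∘ Sum.inl) (w ∘ Sum.inr) := by
    obtain ⟨P, hP⟩ := hμpoly
    exact ⟨P, fun w i => (hP _ _ i).trans (by rw [Sum.elim_comp_inl_inr])⟩
  have hφ : IsPolynomialMap φ := hφpoly
  have hψ : IsPolynomialMap ψ := hψpoly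
  have hF : IsPolynomialMap (f ∘ eJ) :=
    hμ.comp ((hφ.comp (isPolynomialMap_comp_left Sum.inl)).sumElim
      (hψ.comp (isPolynomialMap_comp_left Sum.inr)))
  have hFw : ∀ c, Semiconj (f ∘ eJ) (weightedScale (Sum.elim wV wH) c) (weightedScale wU c) :=
    fun c z => (congrArg₂ μ (hφeq c _) (hψeq c _)).trans (hμ_equiv c _ _)
  have hf : HasFDerivAt f (Lφ.coprod Lψ) 0 :=
    hasFDerivAt_coprod_of_unital ((hμ.differentiable.comp eN.symm.differentiable) 0)
      hμ_idl hμ_idr hLφ hLψ hφ0 hψ0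
  obtain ⟨G, ⟨P, hP⟩, hleft, hright⟩ := exists_polynomial_inverse_of_hasFDerivAt_zero
    (Sum.forall.2 ⟨hwV, hwH⟩) hF hFw ((map_zero eJ ▸ hf).comp 0 eJ.hasFDerivAt)
    (hcompl.comp eJ.bijective)
  have hl : LeftInverse (eJ ∘ G) f := fun p => by
    simpa using congrArg eJ (hleft (eJ.symm p))
  have hr : RightInverse (eJ ∘ G) f := hright
  exact ⟨⟨hl.injective, hr.surjective⟩, eJ ∘ G, ⟨P, fun u => ⟨fun i => hP u _, fun i => hP u _⟩⟩,
    hl, hr⟩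

/-- The Luna-map argument of Proposition 4.9, in linearized coordinates (char 0, so a unipotent
group `U` is isomorphic as a variety to affine space `𝔸ᴺ` with identity `e = 0`, and the
`𝔾ₘ ⊆ S`-action with strictly positive weights can be linearized): let `U = 𝔸ᴺ` carry a
polynomial group law `μ` with identity `0`, equivariant for a `𝔾ₘ`-action with strictly
positive weights; let `V` and `H` be the images of equivariant polynomial embeddings
`φ : 𝔸ᵃ → U`, `ψ : 𝔸ᵇ → U` through `e`, with `H` a subgroup, whose tangent spaces at `e` are
complementary (`Lie(V) ⊕ Lie(H) = Lie(U)`). Then the multiplication map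
`V × H → U, (v, h) ↦ μ(v, h)` is an isomorphism of schemes (a bijection, polynomial with
polynomial inverse by equivariance). -/
theorem stmt_17 (N a b : ℕ) (hab : a + b = N)
    (wU : Fin N → ℕ) (hwU : ∀ i, 0 < wU i)
    (wV : Fin a → ℕ) (hwV : ∀ i, 0 < wV i)
    (wH : Fin b → ℕ) (hwH : ∀ i, 0 < wH i)
    (μ : (Fin N → ℂ) → (Fin N → ℂ) → (Fin N → ℂ))
    (hμpoly : IsPolyMap2 μ)
    (hμ_idl : ∀ x, μ 0 x = x) (hμ_idr : ∀ x, μ x 0 = x)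
    (hμ_assoc : ∀ x y z, μ (μ x y) z = μ x (μ y z))
    (hμ_inv : ∀ x, ∃ y, μ x y = 0)
    (hμ_equiv : ∀ c x y, μ (scaleWt wU c x) (scaleWt wU c y) = scaleWt wU c (μ x y))
    (φ : (Fin a → ℂ) → (Fin N → ℂ)) (ψ : (Fin b → ℂ) → (Fin N → ℂ))
    (hφpoly : IsPolyMap φ) (hψpoly : IsPolyMap ψ)
    (hφ0 : φ 0 = 0) (hψ0 : ψ 0 = 0)
    (hφeq : ∀ c x, φ (scaleWt wV c x) = scaleWt wU c (φ x))
    (hψeq : ∀ c y, ψ (scaleWt wH c y) = scaleWt wU c (ψ y))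
    (hψsub : ∀ y y', ∃ y'', μ (ψ y) (ψ y') = ψ y'')
    (Lφ : (Fin a → ℂ) →L[ℂ] (Fin N → ℂ)) (Lψ : (Fin b → ℂ) →L[ℂ] (Fin N → ℂ))
    (hLφ : HasFDerivAt φ Lφ 0) (hLψ : HasFDerivAt ψ Lψ 0)
    (hcompl : Function.Bijective fun p : (Fin a → ℂ) × (Fin b → ℂ) => Lφ p.1 + Lψ p.2) :
    Function.Bijective (fun p : (Fin a → ℂ) × (Fin b → ℂ) => μ (φ p.1) (ψ p.2)) ∧
    ∃ ι : (Fin N → ℂ) → (Fin a → ℂ) × (Fin b → ℂ),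
      (∃ P : (Fin a ⊕ Fin b) → MvPolynomial (Fin N) ℂ,
        ∀ u, (∀ i, (ι u).1 i = MvPolynomial.eval u (P (Sum.inl i))) ∧
          ∀ i, (ι u).2 i = MvPolynomial.eval u (P (Sum.inr i))) ∧
      Function.LeftInverse ι (fun p : (Fin a → ℂ) × (Fin b → ℂ) => μ (φ p.1) (ψ p.2)) ∧
      Function.RightInverse ι (fun p : (Fin a → ℂ) × (Fin b → ℂ) => μ (φ p.1) (ψ p.2)) :=
  stmt_17_general N a b wU wV hwV wH hwH μ hμpoly hμ_idl hμ_idr hμ_equiv φ ψ hφpoly hψpoly hφ0 hψ0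
    hφeq hψeq Lφ Lψ hLφ hLψ hcompl
end
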